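/- arXiv:1703.01684 — 3 statements merged into one kernel-verified Lean document; each statement's English description precedes it below -/
import Mathlib

section
/- Fix integers n, m, m' all greater than 2, set m̄ = m' − 1, and let e₁, …, eₙ be the standard basis of ℝⁿ. In ℝ^{n+1}, for i = 1, …, n define Sᵢ = {(m̄·eᵢ, 1)} ∪ {(a, 0) : a ∈ ℕ₀ⁿ, |a|₁ = m − 1}, and define S_{n+1} = {(e₁, 0), …, (eₙ, 0), 0}. Also define T = {(a, 0) : a ∈ ℕ₀ⁿ, |a|₁ = m − 1} ∪ {(a, 1) : a ∈ ℕ₀ⁿ, |a|₁ = m̄}. Then mvol(conv S₁, …, conv Sₙ, conv S_{n+1}) = mvol(conv T, …, conv T (n copies), conv S_{n+1}). -/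
open MeasureTheory Pointwise

/-- Mixed volume via inclusion–exclusion. -/
noncomputable def mvol {d : ℕ} {ι : Type*} [Fintype ι]
    (Q : ι → Set (EuclideanSpace ℝ (Fin d))) : ℝ :=
  ∑ I ∈ Finset.univ.powerset.filter Finset.Nonempty,
    (-1 : ℝ) ^ (Fintype.card ι - I.card) * (volume (∑ i ∈ I, Q i)).toReal

/-- `tvec a t = (a, t) ∈ ℝ^{n+1}`: the lattice point `a ∈ ℕ₀ⁿ` with appended last
coordinate `t`. -/
noncomputable def tvec {n : ℕ} (a : Fin n → ℕ) (t : ℝ) : EuclideanSpace ℝ (Fin (n + 1)) :=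
  (EuclideanSpace.equiv (Fin (n + 1)) ℝ).symm (Fin.snoc (fun j => (a j : ℝ)) t)

/-- The support `Sᵢ = {(m̄·eᵢ, 1)} ∪ {(a, 0) : a ∈ ℕ₀ⁿ, |a|₁ = m−1}` of the `i`-th tensor
eigenpair equation, with `m̄ = m' − 1`. -/
noncomputable def teS (n m m' : ℕ) (i : Fin n) : Set (EuclideanSpace ℝ (Fin (n + 1))) :=
  {tvec (fun j => if j = i then m' - 1 else 0) 1} ∪
    {x | ∃ a : Fin n → ℕ, (∑ j, a j) = m - 1 ∧ x = tvec a 0}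

/-- The support `S_{n+1} = {(e₁,0), …, (eₙ,0), 0}` of the normalization equation. -/
noncomputable def teSlast (n : ℕ) : Set (EuclideanSpace ℝ (Fin (n + 1))) :=
  (Set.range fun i : Fin n => tvec (fun j => if j = i then 1 else 0) (0 : ℝ)) ∪ {0}

/-- `T = {(a,0) : |a|₁ = m−1} ∪ {(a,1) : |a|₁ = m̄}`: the common support of the generalized
tensor eigenpair equations. -/
noncomputable def teT (n m m' : ℕ) : Set (EuclideanSpace ℝ (Fin (n + 1))) :=
  {x | ∃ a : Fin n → ℕ, (∑ j, a j) = m - 1 ∧ x = tvec a 0} ∪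
    {x | ∃ a : Fin n → ℕ, (∑ j, a j) = m' - 1 ∧ x = tvec a 1}

namespace TMV

abbrev Eu (n : ℕ) := EuclideanSpace ℝ (Fin (n + 1))

variable {n : ℕ}

noncomputable def vecc {n : ℕ} (x : Fin n → ℝ) (t : ℝ) : Eu n :=
  (EuclideanSpace.equiv (Fin (n + 1)) ℝ).symm (Fin.snoc x t)

@[simp] lemma vecc_castSucc (x : Fin n → ℝ) (t : ℝ) (j : Fin n) :
    vecc x t j.castSucc = x j := by
  simp [vecc, EuclideanSpace.equiv, Fin.snoc_castSucc]

@[simp] lemma vecc_last (x : Fin n → ℝ) (t : ℝ) :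
    vecc x t (Fin.last n) = t := by
  simp [vecc, EuclideanSpace.equiv]

lemma tvec_eq_vecc (a : Fin n → ℕ) (t : ℝ) : tvec a t = vecc (fun j => (a j : ℝ)) t := rfl

lemma eq_vecc_self (z : Eu n) :
    z = vecc (fun j => z j.castSucc) (z (Fin.last n)) := by
  refine PiLp.ext fun j => ?_
  induction j using Fin.lastCases with
  | last => simp
  | cast j => simp

lemma coord_sum {ι : Type*} (s : Finset ι) (f : ι → Eu n)
    (j : Fin (n+1)) : (∑ i ∈ s, f i) j = ∑ i ∈ s, f i j := by
  classical
  induction s using Finset.induction_on with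
  | empty => rfl
  | insert _ _ ha ih => rw [Finset.sum_insert ha, Finset.sum_insert ha, ← ih]; rfl

lemma mem_setSum {ι : Type*} [DecidableEq ι] {s : Finset ι} {A : ι → Set (Eu n)}
    {z : Eu n} :
    z ∈ ∑ i ∈ s, A i ↔ ∃ f : ι → Eu n,
      (∀ i ∈ s, f i ∈ A i) ∧ z = ∑ i ∈ s, f i := by
  induction s using Finset.induction_on generalizing z with
  | empty =>
    simp only [Finset.sum_empty]
    constructor
    · intro hz; exact ⟨fun _ => 0, by simp, by simpa using hz⟩
    · rintro ⟨f, -, rfl⟩; simp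
  | @insert a s ha ih =>
    rw [Finset.sum_insert ha]
    constructor
    · rintro hz
      rw [Set.mem_add] at hz
      obtain ⟨u, hu, v, hv, rfl⟩ := hz
      obtain ⟨f, hf, rfl⟩ := ih.1 hv
      refine ⟨fun x => if x = a then u else f x, ?_, ?_⟩
      · intro i hi
        by_cases hia : i = a
        · subst hia; simp [hu]
        · have hi' : i ∈ s := by
            rcases Finset.mem_insert.1 hi with h | h
            · exact absurd h hia
            · exact h
          simp [hia, hf i hi']
      · rw [Finset.sum_insert ha]
        simp only [if_pos rfl]
        congr 1
        exact (Finset.sum_congr rfl fun i hi => by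
          have : i ≠ a := by rintro rfl; exact ha hi
          simp [this]).symm
    · rintro ⟨f, hf, rfl⟩
      rw [Finset.sum_insert ha, Set.mem_add]
      exact ⟨f a, hf a (Finset.mem_insert_self a s), ∑ i ∈ s, f i,
        ih.2 ⟨f, fun i hi => hf i (Finset.mem_insert_of_mem hi), rfl⟩, rfl⟩

/-- The real number `m - 1`. -/
noncomputable def Mr (m : ℕ) : ℝ := (m : ℝ) - 1

lemma Mr_pos {m : ℕ} (hm : 2 < m) : 0 < Mr m := by
  have : (3 : ℝ) ≤ (m : ℝ) := by exact_mod_cast hm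
  simp only [Mr]; linarith

lemma Mr_cast {m : ℕ} (hm : 2 < m) : ((m - 1 : ℕ) : ℝ) = Mr m := by
  have : 1 ≤ m := by omega
  simp [Mr, Nat.cast_sub this]

/-- sum of the first `n` coordinates -/
noncomputable def Ssum (z : Eu n) : ℝ := ∑ j : Fin n, z j.castSucc

lemma Ssum_combo (a b : ℝ) (x y : Eu n) : Ssum (a • x + b • y) = a * Ssum x + b * Ssum y := by
  simp only [Ssum, PiLp.add_apply, PiLp.smul_apply, smul_eq_mul, Finset.sum_add_distrib,
    Finset.mul_sum]

/-- convex combination of finitely many points lies in the convex hull -/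
lemma comb_mem {ι : Type*} [Fintype ι] (pts : ι → Eu n) (Sset : Set (Eu n))
    (hp : ∀ i, pts i ∈ Sset) (w : ι → ℝ) (hw : ∀ i, 0 ≤ w i) (h1 : ∑ i, w i = 1) :
    (∑ i, w i • pts i) ∈ convexHull ℝ Sset := by
  rw [← Finset.centerMass_eq_of_sum_1 _ _ h1]
  exact Finset.centerMass_mem_convexHull _ (fun i _ => hw i) (by rw [h1]; norm_num)
    (fun i _ => hp i)

/-- base points: `(u, 0)` with `u ≥ 0`, `∑ u = m - 1` lie in the hull of the base support -/
lemma base_mem {m : ℕ} (hm : 2 < m) (u : Fin n → ℝ) (hu : ∀ j, 0 ≤ u j)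
    (hus : ∑ j, u j = Mr m) :
    vecc u 0 ∈ convexHull ℝ {x : Eu n | ∃ a : Fin n → ℕ, (∑ j, a j) = m - 1 ∧ x = tvec a 0} := by
  have hM := Mr_pos hm
  have key : vecc u 0 = ∑ j : Fin n, (u j / Mr m) •
      tvec (fun j' => if j' = j then m - 1 else 0) 0 := by
    refine PiLp.ext fun l => ?_
    rw [coord_sum]
    induction l using Fin.lastCases with
    | last => simp [tvec_eq_vecc]
    | cast l =>
      simp only [vecc_castSucc, tvec_eq_vecc, PiLp.smul_apply, smul_eq_mul,
        apply_ite (Nat.cast : ℕ → ℝ), Nat.cast_zero, mul_ite, mul_zero, Finset.sum_ite_eq]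
      simp only [Finset.mem_univ, if_true, Mr_cast hm]
      field_simp
  rw [key]
  exact comb_mem _ _ (fun j => Set.mem_setOf.mpr
      ⟨fun j' => if j' = j then m - 1 else 0, by simp, rfl⟩) _
    (fun j => div_nonneg (hu j) hM.le)
    (by rw [← Finset.sum_div, hus, div_self (ne_of_gt hM)])

/-- top points: `(v, 1)` with `v ≥ 0`, `∑ v = m' - 1` lie in the hull of the top support -/
lemma top_mem {m' : ℕ} (hm' : 2 < m') (v : Fin n → ℝ) (hv : ∀ j, 0 ≤ v j)
    (hvs : ∑ j, v j = Mr m') :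
    vecc v 1 ∈ convexHull ℝ {x : Eu n | ∃ a : Fin n → ℕ, (∑ j, a j) = m' - 1 ∧ x = tvec a 1} := by
  have hM := Mr_pos hm'
  have key : vecc v 1 = ∑ j : Fin n, (v j / Mr m') •
      tvec (fun j' => if j' = j then m' - 1 else 0) 1 := by
    refine PiLp.ext fun l => ?_
    rw [coord_sum]
    induction l using Fin.lastCases with
    | last =>
      simp only [vecc_last, tvec_eq_vecc, PiLp.smul_apply, smul_eq_mul, mul_one]
      rw [← Finset.sum_div, hvs, div_self (ne_of_gt hM)]
    | cast l =>
      simp only [vecc_castSucc, tvec_eq_vecc, PiLp.smul_apply, smul_eq_mul,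
        apply_ite (Nat.cast : ℕ → ℝ), Nat.cast_zero, mul_ite, mul_zero, Finset.sum_ite_eq]
      simp only [Finset.mem_univ, if_true, Mr_cast hm']
      field_simp
  rw [key]
  exact comb_mem _ _ (fun j => Set.mem_setOf.mpr
      ⟨fun j' => if j' = j then m' - 1 else 0, by simp, rfl⟩) _
    (fun j => div_nonneg (hv j) hM.le)
    (by rw [← Finset.sum_div, hvs, div_self (ne_of_gt hM)])

/-- membership constructor for `conv T` -/
lemma memT {m m' : ℕ} (hm : 2 < m) (hm' : 2 < m') (t : ℝ) (ht0 : 0 ≤ t) (ht1 : t ≤ 1)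
    (u v : Fin n → ℝ) (hu : ∀ j, 0 ≤ u j) (hus : ∑ j, u j = Mr m)
    (hv : ∀ j, 0 ≤ v j) (hvs : ∑ j, v j = Mr m') :
    vecc (fun j => (1 - t) * u j + t * v j) t ∈ convexHull ℝ (teT n m m') := by
  have h1 : vecc u 0 ∈ convexHull ℝ (teT n m m') :=
    convexHull_mono Set.subset_union_left (base_mem hm u hu hus)
  have h2 : vecc v 1 ∈ convexHull ℝ (teT n m m') :=
    convexHull_mono Set.subset_union_right (top_mem hm' v hv hvs)
  have key : vecc (fun j => (1 - t) * u j + t * v j) t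
      = (1 - t) • vecc u 0 + t • vecc v 1 := by
    refine PiLp.ext fun l => ?_
    induction l using Fin.lastCases with
    | last => simp
    | cast l => simp [PiLp.add_apply, PiLp.smul_apply]
  rw [key]
  exact (convex_convexHull ℝ (teT n m m')) h1 h2 (by linarith) ht0 (by ring)

/-- membership constructor for `conv S_i` -/
lemma memS {m m' : ℕ} (hm : 2 < m) (hm' : 2 < m') (i : Fin n) (t : ℝ) (ht0 : 0 ≤ t) (ht1 : t ≤ 1)
    (u : Fin n → ℝ) (hu : ∀ j, 0 ≤ u j) (hus : ∑ j, u j = Mr m) :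
    vecc (fun j => (1 - t) * u j + t * (if j = i then Mr m' else 0)) t
      ∈ convexHull ℝ (teS n m m' i) := by
  have h1 : vecc u 0 ∈ convexHull ℝ (teS n m m' i) :=
    convexHull_mono Set.subset_union_right (base_mem hm u hu hus)
  have h2 : tvec (fun j => if j = i then m' - 1 else 0) 1 ∈ convexHull ℝ (teS n m m' i) :=
    subset_convexHull ℝ _ (Set.mem_union_left _ rfl)
  have key : vecc (fun j => (1 - t) * u j + t * (if j = i then Mr m' else 0)) t
      = (1 - t) • vecc u 0 + t • tvec (fun j => if j = i then m' - 1 else 0) 1 := by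
    refine PiLp.ext fun l => ?_
    induction l using Fin.lastCases with
    | last => simp [tvec_eq_vecc]
    | cast l =>
      simp [tvec_eq_vecc, PiLp.add_apply, PiLp.smul_apply,
        apply_ite (Nat.cast : ℕ → ℝ), Mr_cast hm']
  rw [key]
  exact (convex_convexHull ℝ (teS n m m' i)) h1 h2 (by linarith) ht0 (by ring)

/-- membership constructor for `conv S_last` -/
lemma memQ (q : Fin n → ℝ) (hq : ∀ j, 0 ≤ q j) (hqs : ∑ j, q j ≤ 1) :
    vecc q 0 ∈ convexHull ℝ (teSlast n) := by
  have key : vecc q 0 = ∑ j : Fin (n+1),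
      ((Fin.snoc q (1 - ∑ j : Fin n, q j) : Fin (n+1) → ℝ) j) •
        ((Fin.snoc (fun i : Fin n => tvec (fun j => if j = i then 1 else 0) (0:ℝ)) 0 :
          Fin (n+1) → Eu n) j) := by
    rw [Fin.sum_univ_castSucc]
    simp only [Fin.snoc_castSucc, Fin.snoc_last, smul_zero, add_zero]
    refine PiLp.ext fun l => ?_
    rw [coord_sum]
    induction l using Fin.lastCases with
    | last => simp [tvec_eq_vecc]
    | cast l =>
      simp only [vecc_castSucc, tvec_eq_vecc, PiLp.smul_apply, smul_eq_mul,
        apply_ite (Nat.cast : ℕ → ℝ), Nat.cast_zero, Nat.cast_one, mul_ite, mul_zero,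
        mul_one, Finset.sum_ite_eq]
      simp
  rw [key]
  refine comb_mem _ _ ?_ _ ?_ ?_
  · intro j
    induction j using Fin.lastCases with
    | last => simp only [Fin.snoc_last]; exact Set.mem_union_right _ rfl
    | cast j =>
      simp only [Fin.snoc_castSucc]
      exact Set.mem_union_left _ ⟨j, rfl⟩
  · intro j
    induction j using Fin.lastCases with
    | last => simp only [Fin.snoc_last]; linarith
    | cast j => simp only [Fin.snoc_castSucc]; exact hq j
  · rw [Fin.sum_univ_castSucc]
    simp only [Fin.snoc_castSucc, Fin.snoc_last]
    ring

/-- upper-bound description of `conv S_i` -/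
def KS (n m m' : ℕ) (i : Fin n) : Set (Eu n) :=
  {z | (∀ j : Fin n, 0 ≤ z j.castSucc) ∧ 0 ≤ z (Fin.last n) ∧ z (Fin.last n) ≤ 1 ∧
    Ssum z = Mr m + z (Fin.last n) * (Mr m' - Mr m) ∧
    Mr m' * z (Fin.last n) ≤ z i.castSucc}

def KT (n m m' : ℕ) : Set (Eu n) :=
  {z | (∀ j : Fin n, 0 ≤ z j.castSucc) ∧ 0 ≤ z (Fin.last n) ∧ z (Fin.last n) ≤ 1 ∧
    Ssum z = Mr m + z (Fin.last n) * (Mr m' - Mr m)}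

def KQ (n : ℕ) : Set (Eu n) :=
  {z | (∀ j : Fin n, 0 ≤ z j.castSucc) ∧ z (Fin.last n) = 0 ∧ Ssum z ≤ 1}

lemma combo_coord (a b : ℝ) (x y : Eu n) (j : Fin (n+1)) :
    (a • x + b • y) j = a * x j + b * y j := by simp

lemma convex_KT {m m' : ℕ} : Convex ℝ (KT n m m') := by
  intro x hx y hy a b ha hb hab
  obtain ⟨h1, h2, h3, h4⟩ := hx
  obtain ⟨g1, g2, g3, g4⟩ := hy
  refine ⟨fun j => ?_, ?_, ?_, ?_⟩ <;>
    simp only [combo_coord, Ssum_combo]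
  · exact add_nonneg (mul_nonneg ha (h1 j)) (mul_nonneg hb (g1 j))
  · exact add_nonneg (mul_nonneg ha h2) (mul_nonneg hb g2)
  · nlinarith
  · linear_combination a * h4 + b * g4 + Mr m * hab

lemma convex_KS {m m' : ℕ} {i : Fin n} : Convex ℝ (KS n m m' i) := by
  intro x hx y hy a b ha hb hab
  obtain ⟨h1, h2, h3, h4, h5⟩ := hx
  obtain ⟨g1, g2, g3, g4, g5⟩ := hy
  refine ⟨fun j => ?_, ?_, ?_, ?_, ?_⟩ <;>
    simp only [combo_coord, Ssum_combo]
  · exact add_nonneg (mul_nonneg ha (h1 j)) (mul_nonneg hb (g1 j))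
  · exact add_nonneg (mul_nonneg ha h2) (mul_nonneg hb g2)
  · nlinarith
  · linear_combination a * h4 + b * g4 + Mr m * hab
  · nlinarith [mul_le_mul_of_nonneg_left h5 ha, mul_le_mul_of_nonneg_left g5 hb]

lemma convex_KQ : Convex ℝ (KQ n) := by
  intro x hx y hy a b ha hb hab
  obtain ⟨h1, h2, h3⟩ := hx
  obtain ⟨g1, g2, g3⟩ := hy
  refine ⟨fun j => ?_, ?_, ?_⟩ <;>
    simp only [combo_coord, Ssum_combo]
  · exact add_nonneg (mul_nonneg ha (h1 j)) (mul_nonneg hb (g1 j))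
  · rw [h2, g2]; ring
  · nlinarith

lemma Ssum_tvec (a : Fin n → ℕ) (t : ℝ) : Ssum (tvec a t) = ((∑ j, a j : ℕ) : ℝ) := by
  simp [Ssum, tvec_eq_vecc, Nat.cast_sum]

lemma hullS_subset {m m' : ℕ} (hm : 2 < m) (hm' : 2 < m') (i : Fin n) :
    convexHull ℝ (teS n m m' i) ⊆ KS n m m' i := by
  refine convexHull_min ?_ convex_KS
  rintro z (rfl | ⟨a, ha, rfl⟩)
  · refine ⟨fun j => ?_, ?_, ?_, ?_, ?_⟩
    · simp only [tvec_eq_vecc, vecc_castSucc]; positivity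
    · simp [tvec_eq_vecc]
    · simp [tvec_eq_vecc]
    · rw [Ssum_tvec]
      have hs : (∑ j : Fin n, if j = i then m' - 1 else 0) = m' - 1 := by simp
      rw [hs, Mr_cast hm']
      simp only [tvec_eq_vecc, vecc_last]; ring
    · simp [tvec_eq_vecc, Mr_cast hm']
  · refine ⟨fun j => ?_, ?_, ?_, ?_, ?_⟩
    · simp only [tvec_eq_vecc, vecc_castSucc]; positivity
    · simp [tvec_eq_vecc]
    · simp [tvec_eq_vecc]
    · rw [Ssum_tvec, ha]
      simp only [tvec_eq_vecc, vecc_last]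
      rw [Mr_cast hm]; ring
    · simp only [tvec_eq_vecc, vecc_last, vecc_castSucc, mul_zero]; positivity

lemma hullT_subset {m m' : ℕ} (hm : 2 < m) (hm' : 2 < m') :
    convexHull ℝ (teT n m m') ⊆ KT n m m' := by
  refine convexHull_min ?_ convex_KT
  rintro z (⟨a, ha, rfl⟩ | ⟨a, ha, rfl⟩)
  · refine ⟨fun j => ?_, ?_, ?_, ?_⟩
    · simp only [tvec_eq_vecc, vecc_castSucc]; positivity
    · simp [tvec_eq_vecc]
    · simp [tvec_eq_vecc]
    · rw [Ssum_tvec, ha]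
      simp only [tvec_eq_vecc, vecc_last]
      rw [Mr_cast hm]; ring
  · refine ⟨fun j => ?_, ?_, ?_, ?_⟩
    · simp only [tvec_eq_vecc, vecc_castSucc]; positivity
    · simp [tvec_eq_vecc]
    · simp [tvec_eq_vecc]
    · rw [Ssum_tvec, ha]
      simp only [tvec_eq_vecc, vecc_last]
      rw [Mr_cast hm']; ring

lemma hullQ_subset : convexHull ℝ (teSlast n) ⊆ KQ n := by
  refine convexHull_min ?_ convex_KQ
  rintro z (⟨i, rfl⟩ | rfl)
  · refine ⟨fun j => ?_, ?_, ?_⟩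
    · simp only [tvec_eq_vecc, vecc_castSucc]; positivity
    · simp [tvec_eq_vecc]
    · rw [Ssum_tvec]
      have hs : (∑ j : Fin n, if j = i then 1 else 0) = 1 := by simp
      rw [hs]; norm_num
  · exact ⟨fun j => by simp, by simp, by simp [Ssum]⟩

noncomputable def HTs (n m m' : ℕ) (k : ℝ) : Set (Eu n) :=
  {z | (∀ j : Fin n, 0 ≤ z j.castSucc) ∧ 0 ≤ z (Fin.last n) ∧ z (Fin.last n) ≤ k ∧
    k * Mr m + z (Fin.last n) * (Mr m' - Mr m) ≤ Ssum z ∧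
    Ssum z ≤ k * Mr m + z (Fin.last n) * (Mr m' - Mr m) + 1}

noncomputable def HSs (n m m' : ℕ) (I' : Finset (Fin n)) : Set (Eu n) :=
  HTs n m m' I'.card ∩
    {z | Mr m' * z (Fin.last n) ≤ ∑ i ∈ I', min (Mr m') (z i.castSucc)}

lemma Ssum_add (x y : Eu n) : Ssum (x + y) = Ssum x + Ssum y := by
  simp [Ssum, PiLp.add_apply, Finset.sum_add_distrib]

lemma Ssum_finsum {ι : Type*} (s : Finset ι) (f : ι → Eu n) :
    Ssum (∑ i ∈ s, f i) = ∑ i ∈ s, Ssum (f i) := by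
  simp only [Ssum, coord_sum]
  exact Finset.sum_comm

lemma Ssum_vecc (x : Fin n → ℝ) (t : ℝ) : Ssum (vecc x t) = ∑ j, x j := by
  simp [Ssum]

lemma sumT_eq {m m' : ℕ} (hm : 2 < m) (hm' : 2 < m') (I' : Finset (Fin n))
    (hne : I'.Nonempty) :
    (∑ i ∈ I', convexHull ℝ (teT n m m')) + convexHull ℝ (teSlast n)
      = HTs n m m' I'.card := by
  classical
  have hM := Mr_pos hm
  have hM' := Mr_pos hm'
  have hk1 : (1 : ℝ) ≤ I'.card := by exact_mod_cast Finset.card_pos.mpr hne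
  set k : ℝ := (I'.card : ℝ) with hk
  apply Set.Subset.antisymm
  · rintro z hz
    rw [Set.mem_add] at hz
    obtain ⟨y, hy, q, hq, rfl⟩ := hz
    obtain ⟨f, hf, rfl⟩ := mem_setSum.1 hy
    have hfK : ∀ i ∈ I', f i ∈ KT n m m' := fun i hi => hullT_subset hm hm' (hf i hi)
    have hqK := hullQ_subset hq
    obtain ⟨hq1, hq2, hq3⟩ := hqK
    have hcoord : ∀ j : Fin (n+1), ((∑ i ∈ I', f i) + q) j = (∑ i ∈ I', f i j) + q j :=
      fun j => by rw [PiLp.add_apply, coord_sum]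
    have hlast : ((∑ i ∈ I', f i) + q) (Fin.last n) = ∑ i ∈ I', f i (Fin.last n) := by
      rw [hcoord, hq2, add_zero]
    have hS : Ssum ((∑ i ∈ I', f i) + q) = (∑ i ∈ I', Ssum (f i)) + Ssum q := by
      rw [Ssum_add, Ssum_finsum]
    have hSf : ∑ i ∈ I', Ssum (f i) = k * Mr m + (∑ i ∈ I', f i (Fin.last n)) * (Mr m' - Mr m) := by
      rw [Finset.sum_congr rfl (fun i hi => (hfK i hi).2.2.2), Finset.sum_add_distrib]
      rw [Finset.sum_const, ← Finset.sum_mul]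
      simp [hk, mul_comm]
    have hq0 : 0 ≤ Ssum q := Finset.sum_nonneg fun j _ => hq1 j
    refine ⟨fun j => ?_, ?_, ?_, ?_, ?_⟩
    · rw [hcoord]
      exact add_nonneg (Finset.sum_nonneg fun i hi => (hfK i hi).1 j) (hq1 j)
    · rw [hlast]; exact Finset.sum_nonneg fun i hi => (hfK i hi).2.1
    · rw [hlast, hk]
      calc ∑ i ∈ I', f i (Fin.last n) ≤ ∑ _i ∈ I', (1:ℝ) :=
            Finset.sum_le_sum fun i hi => (hfK i hi).2.2.1
        _ = I'.card := by simp
    · rw [hS, hSf, hlast]; linarith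
    · rw [hS, hSf, hlast]; linarith
  · rintro z ⟨hz1, hz2, hz3, hz4, hz5⟩
    set h : ℝ := z (Fin.last n)
    set Sz : ℝ := Ssum z with hSz
    set c : ℝ := k * Mr m + h * (Mr m' - Mr m) with hc
    have hkpos : (0:ℝ) < k := by linarith
    have hcpos : 0 < c := by
      rcases le_or_gt (Mr m) (Mr m') with hd | hd
      · nlinarith
      · nlinarith
    have hSzpos : 0 < Sz := lt_of_lt_of_le hcpos hz4
    set t : ℝ := h / k with ht
    have ht0 : 0 ≤ t := div_nonneg hz2 hkpos.le
    have ht1 : t ≤ 1 := by rw [ht, div_le_one hkpos]; exact hz3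
    set x : Fin n → ℝ := fun j => z j.castSucc with hx
    have hxsum : ∑ j, x j = Sz := rfl
    set fpt : Eu n := vecc (fun j => (1 - t) * (Mr m * x j / Sz) + t * (Mr m' * x j / Sz)) t
      with hfpt
    set qpt : Eu n := vecc (fun j => ((Sz - c) / Sz) * x j) 0 with hqpt
    have hfmem : fpt ∈ convexHull ℝ (teT n m m') := by
      apply memT hm hm' t ht0 ht1
      · intro j; exact div_nonneg (mul_nonneg hM.le (hz1 j)) hSzpos.le
      · rw [← Finset.sum_div, ← Finset.mul_sum, hxsum, mul_div_assoc,
          div_self (ne_of_gt hSzpos), mul_one]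
      · intro j; exact div_nonneg (mul_nonneg hM'.le (hz1 j)) hSzpos.le
      · rw [← Finset.sum_div, ← Finset.mul_sum, hxsum, mul_div_assoc,
          div_self (ne_of_gt hSzpos), mul_one]
    have hqmem : qpt ∈ convexHull ℝ (teSlast n) := by
      apply memQ
      · intro j
        exact mul_nonneg (div_nonneg (by linarith) hSzpos.le) (hz1 j)
      · rw [← Finset.mul_sum, hxsum]
        rw [div_mul_cancel₀ _ (ne_of_gt hSzpos)]
        linarith
    have hzeq : z = (∑ _i ∈ I', fpt) + qpt := by
      refine PiLp.ext fun l => ?_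
      rw [PiLp.add_apply, coord_sum, Finset.sum_const]
      induction l using Fin.lastCases with
      | last =>
        simp only [hfpt, hqpt, vecc_last, nsmul_eq_mul, ← hk]
        rw [ht]; field_simp
        exact (add_zero _).symm
      | cast l =>
        simp only [hfpt, hqpt, vecc_castSucc, nsmul_eq_mul, ← hk]
        have : x l = z l.castSucc := rfl
        rw [← this, ht, hc]
        field_simp
        ring
    rw [hzeq]
    exact Set.add_mem_add (mem_setSum.2 ⟨fun _ => fpt, fun i _ => hfmem, rfl⟩) hqmem

lemma sumS_eq {m m' : ℕ} (hm : 2 < m) (hm' : 2 < m') (I' : Finset (Fin n))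
    (hne : I'.Nonempty) :
    (∑ i ∈ I', convexHull ℝ (teS n m m' i)) + convexHull ℝ (teSlast n)
      = HSs n m m' I' := by
  classical
  have hM := Mr_pos hm
  have hM' := Mr_pos hm'
  have hk1 : (1 : ℝ) ≤ I'.card := by exact_mod_cast Finset.card_pos.mpr hne
  set k : ℝ := (I'.card : ℝ) with hk
  apply Set.Subset.antisymm
  · rintro z hz
    rw [Set.mem_add] at hz
    obtain ⟨y, hy, q, hq, rfl⟩ := hz
    obtain ⟨f, hf, rfl⟩ := mem_setSum.1 hy
    have hfK : ∀ i ∈ I', f i ∈ KS n m m' i := fun i hi => hullS_subset hm hm' i (hf i hi)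
    obtain ⟨hq1, hq2, hq3⟩ := hullQ_subset hq
    have hcoord : ∀ j : Fin (n+1), ((∑ i ∈ I', f i) + q) j = (∑ i ∈ I', f i j) + q j :=
      fun j => by rw [PiLp.add_apply, coord_sum]
    have hlast : ((∑ i ∈ I', f i) + q) (Fin.last n) = ∑ i ∈ I', f i (Fin.last n) := by
      rw [hcoord, hq2, add_zero]
    have hS : Ssum ((∑ i ∈ I', f i) + q) = (∑ i ∈ I', Ssum (f i)) + Ssum q := by
      rw [Ssum_add, Ssum_finsum]
    have hSf : ∑ i ∈ I', Ssum (f i)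
        = k * Mr m + (∑ i ∈ I', f i (Fin.last n)) * (Mr m' - Mr m) := by
      rw [Finset.sum_congr rfl (fun i hi => (hfK i hi).2.2.2.1), Finset.sum_add_distrib]
      rw [Finset.sum_const, ← Finset.sum_mul]
      simp [hk, mul_comm]
    have hq0 : 0 ≤ Ssum q := Finset.sum_nonneg fun j _ => hq1 j
    have hnn : ∀ j : Fin n, 0 ≤ ((∑ i ∈ I', f i) + q) j.castSucc := by
      intro j
      rw [hcoord]
      exact add_nonneg (Finset.sum_nonneg fun i hi => (hfK i hi).1 j) (hq1 j)
    refine ⟨⟨fun j => hnn j, ?_, ?_, ?_, ?_⟩, ?_⟩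
    · rw [hlast]; exact Finset.sum_nonneg fun i hi => (hfK i hi).2.1
    · rw [hlast]
      calc ∑ i ∈ I', f i (Fin.last n) ≤ ∑ _i ∈ I', (1:ℝ) :=
            Finset.sum_le_sum fun i hi => (hfK i hi).2.2.1
        _ = I'.card := by simp
    · rw [hS, hSf, hlast]; linarith
    · rw [hS, hSf, hlast]; linarith
    · simp only [Set.mem_setOf_eq]
      rw [hlast, Finset.mul_sum]
      refine Finset.sum_le_sum fun i hi => ?_
      refine le_min ?_ ?_
      · nlinarith [(hfK i hi).2.1, (hfK i hi).2.2.1]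
      · calc Mr m' * f i (Fin.last n) ≤ f i i.castSucc := (hfK i hi).2.2.2.2
          _ ≤ ∑ i' ∈ I', f i' i.castSucc :=
              Finset.single_le_sum (fun i' hi' => (hfK i' hi').1 i) hi
          _ ≤ ((∑ i' ∈ I', f i') + q) i.castSucc := by
              rw [hcoord]; linarith [hq1 i]
  · rintro z ⟨⟨hz1, hz2, hz3, hz4, hz5⟩, hzmin⟩
    set h : ℝ := z (Fin.last n)
    set Sz : ℝ := Ssum z with hSz
    set c : ℝ := k * Mr m + h * (Mr m' - Mr m) with hc
    set x : Fin n → ℝ := fun j => z j.castSucc with hx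
    have hxsum : ∑ j, x j = Sz := rfl
    set σ : ℝ := ∑ i ∈ I', min (Mr m') (x i) with hσ
    have hσmin : Mr m' * h ≤ σ := hzmin
    have hmin_nonneg : ∀ i, 0 ≤ min (Mr m') (x i) := fun i => le_min hM'.le (hz1 i)
    have hσ0 : 0 ≤ σ := Finset.sum_nonneg fun i _ => hmin_nonneg i
    have hkpos : (0:ℝ) < k := by linarith
    rcases eq_or_lt_of_le hz3 with hhk | hhk
    · -- degenerate case h = k : all apexes
      have hxM' : ∀ i ∈ I', Mr m' ≤ x i := by
        intro i hi
        by_contra hlt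
        push_neg at hlt
        have hstrict : σ < ∑ _i ∈ I', Mr m' := by
          refine Finset.sum_lt_sum (fun i' _ => min_le_left _ _) ⟨i, hi, ?_⟩
          exact min_lt_iff.2 (Or.inr hlt)
        rw [Finset.sum_const, nsmul_eq_mul] at hstrict
        rw [hhk] at hσmin
        nlinarith
      set r : Fin n → ℝ := fun j => x j - (if j ∈ I' then Mr m' else 0) with hr
      have hr0 : ∀ j, 0 ≤ r j := by
        intro j
        by_cases hj : j ∈ I' <;> simp [hr, hj]
        · linarith [hxM' j hj]
        · exact hz1 j
      have hrsum : ∑ j, r j = Sz - k * Mr m' := by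
        rw [hr]
        rw [Finset.sum_sub_distrib, hxsum]
        congr 1
        rw [Finset.sum_ite_mem, Finset.univ_inter, Finset.sum_const, hk]
        simp [mul_comm]
      have hhk' : h = k := hhk
      have hck : c = k * Mr m' := by rw [hc, hhk']; ring
      have hq : vecc r 0 ∈ convexHull ℝ (teSlast n) := by
        apply memQ r hr0
        rw [hrsum]
        linarith [hz5, hck]
      have hzeq : z = (∑ i ∈ I', tvec (fun j => if j = i then m' - 1 else 0) 1) + vecc r 0 := by
        refine PiLp.ext fun l => ?_
        rw [PiLp.add_apply, coord_sum]
        induction l using Fin.lastCases with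
        | last =>
          simp only [tvec_eq_vecc, vecc_last, Finset.sum_const, nsmul_eq_mul, mul_one]
          rw [add_zero]
          exact hhk
        | cast l =>
          simp only [tvec_eq_vecc, vecc_castSucc, apply_ite (Nat.cast : ℕ → ℝ),
            Nat.cast_zero, Mr_cast hm']
          rw [Finset.sum_ite_eq, hr]
          have : x l = z l.castSucc := rfl
          by_cases hl : l ∈ I' <;> simp [hl, ← this]
      rw [hzeq]
      exact Set.add_mem_add
        (mem_setSum.2 ⟨fun i => tvec (fun j => if j = i then m' - 1 else 0) 1,
          fun i _ => subset_convexHull ℝ _ (Set.mem_union_left _ rfl), rfl⟩) hq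
    · -- main case h < k
      set t : Fin n → ℝ := fun i => (h / σ) * min (Mr m') (x i) with htdef
      have hσcase : σ = 0 → h = 0 := by
        intro h0; nlinarith
      have ht0 : ∀ i, 0 ≤ t i := by
        intro i
        exact mul_nonneg (div_nonneg hz2 hσ0) (hmin_nonneg i)
      have ht1 : ∀ i, t i ≤ 1 := by
        intro i
        rcases eq_or_lt_of_le hσ0 with h0 | hpos
        · simp only [htdef]
          rw [← h0, div_zero, zero_mul]
          norm_num
        · simp only [htdef]
          rw [div_mul_eq_mul_div, div_le_one hpos]
          calc h * min (Mr m') (x i) ≤ h * Mr m' :=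
                mul_le_mul_of_nonneg_left (min_le_left _ _) hz2
            _ ≤ σ := by linarith [hσmin]
      have hts : ∑ i ∈ I', t i = h := by
        rcases eq_or_lt_of_le hσ0 with h0 | hpos
        · have := hσcase h0.symm
          simp only [htdef]
          rw [← Finset.mul_sum, ← hσ, ← h0, this]
          ring
        · simp only [htdef]
          rw [← Finset.mul_sum, ← hσ, div_mul_cancel₀ _ (ne_of_gt hpos)]
      have hvx : ∀ i ∈ I', Mr m' * t i ≤ x i := by
        intro i hi
        rcases eq_or_lt_of_le hσ0 with h0 | hpos
        · simp only [htdef]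
          rw [← h0, div_zero, zero_mul, mul_zero]
          exact hz1 i
        · simp only [htdef]
          calc Mr m' * ((h / σ) * min (Mr m') (x i))
              = (Mr m' * h / σ) * min (Mr m') (x i) := by ring
            _ ≤ 1 * min (Mr m') (x i) := by
                refine mul_le_mul_of_nonneg_right ?_ (hmin_nonneg i)
                rw [div_le_one hpos]; exact hσmin
            _ = min (Mr m') (x i) := one_mul _
            _ ≤ x i := min_le_right _ _
      set r : Fin n → ℝ := fun j => x j - (if j ∈ I' then Mr m' * t j else 0) with hr
      have hr0 : ∀ j, 0 ≤ r j := by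
        intro j
        by_cases hj : j ∈ I' <;> simp only [hr, hj, if_true, if_false]
        · linarith [hvx j hj]
        · simpa using hz1 j
      have hrsum : ∑ j, r j = Sz - Mr m' * h := by
        rw [hr, Finset.sum_sub_distrib, hxsum]
        congr 1
        rw [Finset.sum_ite_mem, Finset.univ_inter, ← Finset.mul_sum, hts]
      have hden : 0 < Sz - Mr m' * h := by
        have : c - Mr m' * h = (k - h) * Mr m := by rw [hc]; ring
        nlinarith
      set β : ℝ := (Sz - c) / (Sz - Mr m' * h) with hβ
      have hβ0 : 0 ≤ β := div_nonneg (by linarith) hden.le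
      have hβ1 : β ≤ 1 := by
        rw [hβ, div_le_one hden]
        have : c - Mr m' * h = (k - h) * Mr m := by rw [hc]; ring
        nlinarith
      set w : Fin n → ℝ := fun j => (1 - β) * r j with hw
      have hwsum : ∑ j, w j = (k - h) * Mr m := by
        rw [hw, ← Finset.mul_sum, hrsum, hβ]
        field_simp
        ring
      set u : Fin n → ℝ := fun j => w j / (k - h) with hu
      have hu0 : ∀ j, 0 ≤ u j :=
        fun j => div_nonneg (mul_nonneg (by linarith) (hr0 j)) (by linarith)
      have husum : ∑ j, u j = Mr m := by
        simp only [hu]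
        rw [← Finset.sum_div, hwsum]
        exact mul_div_cancel_left₀ _ (ne_of_gt (by linarith))
      set fpt : Fin n → Eu n := fun i =>
        vecc (fun j => (1 - t i) * u j + t i * (if j = i then Mr m' else 0)) (t i) with hfpt
      have hfmem : ∀ i ∈ I', fpt i ∈ convexHull ℝ (teS n m m' i) :=
        fun i _ => memS hm hm' i (t i) (ht0 i) (ht1 i) u hu0 husum
      set qpt : Eu n := vecc (fun j => β * r j) 0 with hqpt
      have hqsum : ∑ j, β * r j = Sz - c := by
        rw [← Finset.mul_sum, hrsum, hβ]
        field_simp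
      have hqmem : qpt ∈ convexHull ℝ (teSlast n) := by
        apply memQ
        · exact fun j => mul_nonneg hβ0 (hr0 j)
        · rw [hqsum]; linarith
      have hzeq : z = (∑ i ∈ I', fpt i) + qpt := by
        refine PiLp.ext fun l => ?_
        rw [PiLp.add_apply, coord_sum]
        induction l using Fin.lastCases with
        | last =>
          simp only [hfpt, hqpt, vecc_last, add_zero]
          exact hts.symm
        | cast l =>
          simp only [hfpt, hqpt, vecc_castSucc]
          rw [Finset.sum_add_distrib, ← Finset.sum_mul]
          have hsum1 : ∑ i ∈ I', (1 - t i) = k - h := by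
            rw [Finset.sum_sub_distrib, hts, Finset.sum_const, hk]
            simp [mul_comm]
          rw [hsum1]
          have hite : ∑ i ∈ I', t i * (if l = i then Mr m' else 0)
              = if l ∈ I' then t l * Mr m' else 0 := by
            rw [Finset.sum_congr rfl (fun i _ => by rw [mul_ite, mul_zero]),
              Finset.sum_ite_eq]
          rw [hite]
          have hkh : k - h ≠ 0 := ne_of_gt (by linarith)
          have hul : (k - h) * u l = (1 - β) * r l := by
            simp only [hu]
            rw [mul_comm, div_mul_cancel₀ _ hkh]
          rw [hul]
          have : x l = z l.castSucc := rfl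
          rw [← this, hr]
          by_cases hl : l ∈ I' <;> simp only [hl, if_true, if_false] <;> ring
      rw [hzeq]
      exact Set.add_mem_add (mem_setSum.2 ⟨fpt, hfmem, rfl⟩) hqmem

/-! ### Measurability and volume lemmas -/

lemma Ssum_smul (c : ℝ) (x : Eu n) : Ssum (c • x) = c * Ssum x := by
  simp [Ssum, PiLp.smul_apply, Finset.mul_sum]

lemma measurable_coord (j : Fin (n+1)) : Measurable fun z : Eu n => z j :=
  (measurable_pi_apply j).comp (WithLp.measurable_ofLp _ _)

lemma measurable_Ssum : Measurable fun z : Eu n => Ssum z :=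
  Finset.measurable_sum _ fun j _ => measurable_coord j.castSucc

lemma meas_forall_nonneg : MeasurableSet {z : Eu n | ∀ j : Fin n, 0 ≤ z j.castSucc} := by
  rw [Set.setOf_forall]
  exact MeasurableSet.iInter fun j => measurableSet_le measurable_const (measurable_coord _)

lemma meas_HT {m m' : ℕ} (k : ℝ) : MeasurableSet (HTs n m m' k) := by
  unfold HTs
  simp only [Set.setOf_and]
  exact meas_forall_nonneg.inter
    ((measurableSet_le measurable_const (measurable_coord _)).inter
      ((measurableSet_le (measurable_coord _) measurable_const).inter
        ((measurableSet_le (by fun_prop) measurable_Ssum).inter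
          (measurableSet_le measurable_Ssum (by fun_prop)))))

lemma meas_min_sum {m' : ℕ} (I' : Finset (Fin n)) :
    Measurable fun z : Eu n => ∑ i ∈ I', min (Mr m') (z i.castSucc) :=
  Finset.measurable_sum _ fun i _ => measurable_const.min (measurable_coord _)

lemma meas_HS {m m' : ℕ} (I' : Finset (Fin n)) : MeasurableSet (HSs n m m' I') :=
  (meas_HT _).inter
    (measurableSet_le (measurable_const.mul (measurable_coord _)) (meas_min_sum I'))

/-- the difference pieces -/
noncomputable def EE (n m m' : ℕ) (I' A : Finset (Fin n)) : Set (Eu n) :=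
  ((HTs n m m' I'.card \ HSs n m m' I') ∩
    {z | ∀ i ∈ A, z i.castSucc < Mr m'}) ∩ {z | ∀ i ∈ I' \ A, Mr m' ≤ z i.castSucc}

/-- the canonical translated difference piece, independent of `I'` -/
noncomputable def RR (n m m' : ℕ) (A : Finset (Fin n)) : Set (Eu n) :=
  {z | (∀ j : Fin n, 0 ≤ z j.castSucc) ∧ (∀ i ∈ A, z i.castSucc < Mr m') ∧
    z (Fin.last n) ≤ 0 ∧
    (∑ i ∈ A, z i.castSucc) < Mr m' * (A.card + z (Fin.last n)) ∧
    A.card * Mr m' + z (Fin.last n) * (Mr m' - Mr m) ≤ Ssum z ∧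
    Ssum z ≤ A.card * Mr m' + z (Fin.last n) * (Mr m' - Mr m) + 1}

lemma meas_forall_mem_lt {m' : ℕ} (A : Finset (Fin n)) :
    MeasurableSet {z : Eu n | ∀ i ∈ A, z i.castSucc < Mr m'} := by
  rw [Set.setOf_forall]
  refine MeasurableSet.iInter fun i => ?_
  rw [Set.setOf_forall]
  exact MeasurableSet.iInter fun _ =>
    measurableSet_lt (measurable_coord _) measurable_const

lemma meas_forall_mem_le {m' : ℕ} (B : Finset (Fin n)) :
    MeasurableSet {z : Eu n | ∀ i ∈ B, Mr m' ≤ z i.castSucc} := by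
  rw [Set.setOf_forall]
  refine MeasurableSet.iInter fun i => ?_
  rw [Set.setOf_forall]
  exact MeasurableSet.iInter fun _ =>
    measurableSet_le measurable_const (measurable_coord _)

lemma meas_EE {m m' : ℕ} (I' A : Finset (Fin n)) : MeasurableSet (EE n m m' I' A) :=
  (((meas_HT _).diff (meas_HS I')).inter (meas_forall_mem_lt A)).inter (meas_forall_mem_le _)

lemma meas_RR {m m' : ℕ} (A : Finset (Fin n)) : MeasurableSet (RR n m m' A) := by
  unfold RR
  simp only [Set.setOf_and]
  refine meas_forall_nonneg.inter ((meas_forall_mem_lt A).inter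
    ((measurableSet_le (measurable_coord _) measurable_const).inter
      (MeasurableSet.inter ?_ (MeasurableSet.inter ?_ ?_))))
  · exact measurableSet_lt (f := fun z : Eu n => ∑ i ∈ A, z i.castSucc)
      (g := fun z : Eu n => Mr m' * ((A.card : ℝ) + z (Fin.last n)))
      (Finset.measurable_sum _ fun i _ => measurable_coord _)
      (measurable_const.mul (measurable_const.add (measurable_coord _)))
  · exact measurableSet_le
      (f := fun z : Eu n => (A.card : ℝ) * Mr m' + z (Fin.last n) * (Mr m' - Mr m))
      (g := fun z : Eu n => Ssum z)
      (measurable_const.add ((measurable_coord _).mul measurable_const)) measurable_Ssum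
  · exact measurableSet_le
      (f := fun z : Eu n => Ssum z)
      (g := fun z : Eu n => (A.card : ℝ) * Mr m' + z (Fin.last n) * (Mr m' - Mr m) + 1)
      measurable_Ssum ((measurable_const.add ((measurable_coord _).mul measurable_const)).add_const 1)

set_option maxHeartbeats 1000000 in
/-- translation carrying `EE` to `RR` -/
lemma EE_eq_preimage {m m' : ℕ} (hm : 2 < m) (hm' : 2 < m') (I' A : Finset (Fin n))
    (hA : A ⊆ I') :
    EE n m m' I' A = (fun z : Eu n =>
      z + (-(vecc (fun j => if j ∈ I' \ A then Mr m' else 0) (I'.card : ℝ)))) ⁻¹'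
        RR n m m' A := by
  classical
  have hM := Mr_pos hm
  have hM' := Mr_pos hm'
  have hcard : ((I' \ A).card : ℝ) = (I'.card : ℝ) - (A.card : ℝ) := by
    rw [Finset.card_sdiff_of_subset hA]
    have := Finset.card_le_card hA
    push_cast [Nat.cast_sub this]
    ring
  have hAI : (A.card : ℝ) ≤ (I'.card : ℝ) := by
    exact_mod_cast Finset.card_le_card hA
  ext z
  set v : Eu n := vecc (fun j => if j ∈ I' \ A then Mr m' else 0) (I'.card : ℝ) with hv
  have hy : ∀ j : Fin n, (z + -v) j.castSucc
      = z j.castSucc - (if j ∈ I' \ A then Mr m' else 0) := by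
    intro j
    simp [hv, PiLp.add_apply, PiLp.neg_apply, sub_eq_add_neg]
  have hyl : (z + -v) (Fin.last n) = z (Fin.last n) - (I'.card : ℝ) := by
    simp [hv, PiLp.add_apply, PiLp.neg_apply, sub_eq_add_neg]
  have hySsum : Ssum (z + -v) = Ssum z - ((I'.card : ℝ) - (A.card : ℝ)) * Mr m' := by
    unfold Ssum
    rw [Finset.sum_congr rfl (fun j _ => hy j), Finset.sum_sub_distrib]
    rw [Finset.sum_ite_mem, Finset.univ_inter, Finset.sum_const, ← hcard]
    simp [mul_comm]
  have hyA : ∑ i ∈ A, (z + -v) i.castSucc = ∑ i ∈ A, z i.castSucc := by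
    refine Finset.sum_congr rfl fun i hi => ?_
    rw [hy i]
    have : i ∉ I' \ A := fun hmem => (Finset.mem_sdiff.1 hmem).2 hi
    simp [this]
  constructor
  · rintro ⟨⟨⟨⟨hz1, hz2, hz3, hz4, hz5⟩, hnotHS⟩, hAlt⟩, hBge⟩
    rw [Set.mem_preimage]
    show z + -v ∈ RR n m m' A
    have hσ : ¬ (Mr m' * z (Fin.last n) ≤ ∑ i ∈ I', min (Mr m') (z i.castSucc)) := by
      intro hcon
      exact hnotHS ⟨⟨hz1, hz2, hz3, hz4, hz5⟩, hcon⟩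
    push_neg at hσ
    have hsplit : ∑ i ∈ I', min (Mr m') (z i.castSucc)
        = ((I'.card : ℝ) - (A.card : ℝ)) * Mr m' + ∑ i ∈ A, z i.castSucc := by
      rw [← Finset.sum_sdiff hA]
      congr 1
      · rw [Finset.sum_congr rfl (fun i hi => min_eq_left (hBge i hi)),
          Finset.sum_const, ← hcard]
        simp [mul_comm]
      · exact Finset.sum_congr rfl fun i hi => min_eq_right (le_of_lt (hAlt i hi))
    refine ⟨fun j => ?_, fun i hi => ?_, ?_, ?_, ?_, ?_⟩
    · rw [hy j]
      by_cases hj : j ∈ I' \ A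
      · simp only [hj, if_true]
        linarith [hBge j hj]
      · simp only [hj, if_false]
        linarith [hz1 j]
    · rw [hy i]
      have : i ∉ I' \ A := fun hmem => (Finset.mem_sdiff.1 hmem).2 hi
      simp only [this, if_false]
      linarith [hAlt i hi]
    · rw [hyl]; linarith
    · rw [hyA, hyl]
      rw [hsplit] at hσ
      nlinarith
    · rw [hySsum, hyl]; nlinarith
    · rw [hySsum, hyl]; nlinarith
  · intro hmem
    rw [Set.mem_preimage] at hmem
    obtain ⟨hy1, hy2, hy3, hy4, hy5, hy6⟩ : z + -v ∈ RR n m m' A := hmem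
    rw [hyA] at hy4
    rw [hyl] at hy3 hy4 hy5 hy6
    rw [hySsum] at hy5 hy6
    have hz1 : ∀ j : Fin n, 0 ≤ z j.castSucc := by
      intro j
      have := hy1 j
      rw [hy j] at this
      by_cases hj : j ∈ I' \ A
      · simp only [hj, if_true] at this; linarith
      · simp only [hj, if_false] at this; linarith
    have hAlt : ∀ i ∈ A, z i.castSucc < Mr m' := by
      intro i hi
      have := hy2 i hi
      rw [hy i] at this
      have hni : i ∉ I' \ A := fun hmem => (Finset.mem_sdiff.1 hmem).2 hi
      simp only [hni, if_false] at this
      linarith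
    have hBge : ∀ i ∈ I' \ A, Mr m' ≤ z i.castSucc := by
      intro i hi
      have := hy1 i
      rw [hy i] at this
      simp only [hi, if_true] at this
      linarith
    have hApos : 0 ≤ ∑ i ∈ A, z i.castSucc :=
      Finset.sum_nonneg fun i hi => hz1 i
    have hzlast : 0 ≤ z (Fin.last n) := by nlinarith
    have hsplit : ∑ i ∈ I', min (Mr m') (z i.castSucc)
        = ((I'.card : ℝ) - (A.card : ℝ)) * Mr m' + ∑ i ∈ A, z i.castSucc := by
      rw [← Finset.sum_sdiff hA]
      congr 1
      · rw [Finset.sum_congr rfl (fun i hi => min_eq_left (hBge i hi)),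
          Finset.sum_const, ← hcard]
        simp [mul_comm]
      · exact Finset.sum_congr rfl fun i hi => min_eq_right (le_of_lt (hAlt i hi))
    have hHT : z ∈ HTs n m m' (I'.card : ℝ) := by
      refine ⟨hz1, hzlast, by linarith, by nlinarith, by nlinarith⟩
    refine ⟨⟨⟨hHT, ?_⟩, hAlt⟩, hBge⟩
    intro hHS
    have := hHS.2
    rw [Set.mem_setOf_eq, hsplit] at this
    nlinarith

lemma vol_EE {m m' : ℕ} (hm : 2 < m) (hm' : 2 < m') (I' A : Finset (Fin n)) (hA : A ⊆ I') :
    volume (EE n m m' I' A) = volume (RR n m m' A) := by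
  rw [EE_eq_preimage hm hm' I' A hA]
  exact measure_preimage_add_right volume _ _

lemma RR_univ_empty {m m' : ℕ} (hm : 2 < m) (hm' : 2 < m') :
    RR n m m' Finset.univ = ∅ := by
  have hM := Mr_pos hm
  ext z
  simp only [RR, Set.mem_setOf_eq, Set.mem_empty_iff_false, iff_false]
  rintro ⟨h1, h2, h3, h4, h5, h6⟩
  have hsum : ∑ i ∈ Finset.univ, z (Fin.castSucc i) = Ssum z := rfl
  have hcard : ((Finset.univ : Finset (Fin n)).card : ℝ) = (n : ℝ) := by
    rw [Finset.card_univ, Fintype.card_fin]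
  rw [hsum, hcard] at h4
  rw [hcard] at h5
  nlinarith [mul_nonneg hM.le (neg_nonneg.2 h3)]

lemma diff_eq_biUnion {m m' : ℕ} (I' : Finset (Fin n)) :
    HTs n m m' I'.card \ HSs n m m' I' = ⋃ A ∈ I'.powerset, EE n m m' I' A := by
  classical
  ext z
  constructor
  · intro hz
    refine Set.mem_biUnion
      (Finset.mem_powerset.2 (Finset.filter_subset (fun i => z i.castSucc < Mr m') I'))
      ⟨⟨hz, ?_⟩, ?_⟩
    · intro i hi
      exact (Finset.mem_filter.1 hi).2
    · intro i hi
      obtain ⟨hiI, hnf⟩ := Finset.mem_sdiff.1 hi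
      by_contra hlt
      push_neg at hlt
      exact hnf (Finset.mem_filter.2 ⟨hiI, hlt⟩)
  · intro hz
    obtain ⟨A, hA, hzA⟩ := Set.mem_iUnion₂.1 hz
    exact hzA.1.1

lemma EE_pairwise_disjoint {m m' : ℕ} (I' : Finset (Fin n)) :
    Set.PairwiseDisjoint (↑I'.powerset : Set (Finset (Fin n))) (EE n m m' I') := by
  intro A hA B hB hne
  rw [Function.onFun]
  rw [Set.disjoint_left]
  intro z hzA hzB
  rw [Finset.mem_coe, Finset.mem_powerset] at hA hB
  by_cases hsub : A ⊆ B
  · have hns : ¬ B ⊆ A := fun h => hne (Finset.Subset.antisymm hsub h)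
    obtain ⟨i, hiB, hiA⟩ := Finset.not_subset.1 hns
    exact absurd (hzB.1.2 i hiB)
      (not_lt.2 (hzA.2 i (Finset.mem_sdiff.2 ⟨hB hiB, hiA⟩)))
  · obtain ⟨i, hiA, hiB⟩ := Finset.not_subset.1 hsub
    exact absurd (hzA.1.2 i hiA)
      (not_lt.2 (hzB.2 i (Finset.mem_sdiff.2 ⟨hA hiA, hiB⟩)))

lemma vol_split {m m' : ℕ} (hm : 2 < m) (hm' : 2 < m') (I' : Finset (Fin n)) :
    volume (HTs n m m' I'.card) = volume (HSs n m m' I')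
      + ∑ A ∈ I'.powerset, volume (RR n m m' A) := by
  have hsub : HSs n m m' I' ⊆ HTs n m m' I'.card := Set.inter_subset_left
  have hu : HTs n m m' (I'.card : ℝ) = HSs n m m' I' ∪ (HTs n m m' I'.card \ HSs n m m' I') :=
    (Set.union_diff_cancel hsub).symm
  rw [hu, measure_union disjoint_sdiff_self_right ((meas_HT _).diff (meas_HS _)),
    diff_eq_biUnion, measure_biUnion_finset (EE_pairwise_disjoint I')
      (fun A _ => meas_EE I' A)]
  congr 1
  exact Finset.sum_congr rfl fun A hA => vol_EE hm hm' I' A (Finset.mem_powerset.1 hA)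

lemma vol_HT_lt_top {m m' : ℕ} (hm : 2 < m) (hm' : 2 < m') (k : ℝ) (hk : 0 ≤ k) :
    volume (HTs n m m' k) < ⊤ := by
  have hM := Mr_pos hm
  have hM' := Mr_pos hm'
  set R : ℝ := k * (Mr m + Mr m') + k + 1 with hR
  have hRk : k ≤ R := by nlinarith
  have hR0 : 0 ≤ R := by nlinarith
  have hsub : HTs n m m' k ⊆ (⇑(MeasurableEquiv.toLp 2 (Fin (n+1) → ℝ)).symm) ⁻¹'
      Set.univ.pi (fun _ : Fin (n+1) => Set.Icc (-R) R) := by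
    rintro z ⟨hz1, hz2, hz3, hz4, hz5⟩
    have hbound : ∀ j : Fin (n+1), z j ∈ Set.Icc (-R) R := by
      intro j
      induction j using Fin.lastCases with
      | last =>
        constructor
        · linarith
        · linarith
      | cast j =>
        have hle : z j.castSucc ≤ Ssum z :=
          Finset.single_le_sum (fun i _ => hz1 i) (Finset.mem_univ j)
        have hSub : Ssum z ≤ R := by
          rcases le_or_gt 0 (Mr m' - Mr m) with hd | hd
          · nlinarith
          · nlinarith
        constructor
        · linarith [hz1 j]
        · linarith
    intro j _
    exact hbound j
  refine lt_of_le_of_lt (measure_mono hsub) ?_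
  rw [(EuclideanSpace.volume_preserving_symm_measurableEquiv_toLp (Fin (n+1))).measure_preimage
    (MeasurableSet.univ_pi fun _ => measurableSet_Icc).nullMeasurableSet]
  rw [volume_pi_pi]
  refine ENNReal.prod_lt_top (fun i _ => ?_)
  rw [Real.volume_Icc]
  exact ENNReal.ofReal_lt_top

/-- the hyperplane functional -/
noncomputable def Lf (n m m' : ℕ) : Eu n →ₗ[ℝ] ℝ where
  toFun := fun z => Ssum z + (Mr m - Mr m') * z (Fin.last n)
  map_add' := fun x y => by
    show Ssum (x + y) + (Mr m - Mr m') * (x + y) (Fin.last n) = _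
    rw [Ssum_add, PiLp.add_apply]
    ring
  map_smul' := fun c x => by
    show Ssum (c • x) + (Mr m - Mr m') * (c • x) (Fin.last n) = _
    rw [Ssum_smul, PiLp.smul_apply]
    simp only [smul_eq_mul, RingHom.id_apply]
    ring

lemma Lf_apply (z : Eu n) {m m' : ℕ} :
    Lf n m m' z = Ssum z + (Mr m - Mr m') * z (Fin.last n) := rfl

lemma vol_levelset_zero {m m' : ℕ} (hn : 0 < n) (c : ℝ) :
    volume {z : Eu n | Lf n m m' z = c} = 0 := by
  classical
  set j₀ : Fin n := ⟨0, hn⟩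
  set w : Eu n := vecc (fun j => if j = j₀ then 1 else 0) 0 with hw
  have hLw : Lf n m m' w = 1 := by
    rw [Lf_apply, hw, vecc_last, Ssum_vecc]
    simp
  set z₀ : Eu n := c • w with hz₀
  have hLz₀ : Lf n m m' z₀ = c := by
    rw [hz₀, _root_.map_smul, hLw]
    simp
  have hker : LinearMap.ker (Lf n m m') ≠ ⊤ := by
    intro htop
    have : Lf n m m' w = 0 := by
      have hmem : w ∈ LinearMap.ker (Lf n m m') := by rw [htop]; trivial
      exact LinearMap.mem_ker.1 hmem
    rw [hLw] at this
    norm_num at this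
  have hseteq : {z : Eu n | Lf n m m' z = c}
      = (fun z => z + (-z₀)) ⁻¹' (LinearMap.ker (Lf n m m') : Set (Eu n)) := by
    ext z
    simp only [Set.mem_setOf_eq, Set.mem_preimage, SetLike.mem_coe, LinearMap.mem_ker,
      map_add, map_neg, hLz₀]
    constructor
    · intro h; rw [h]; ring
    · intro h; linarith
  rw [hseteq, measure_preimage_add_right]
  exact Measure.addHaar_submodule volume _ hker

lemma hullS_hyp {m m' : ℕ} (hm : 2 < m) (hm' : 2 < m') (i : Fin n) :
    convexHull ℝ (teS n m m' i) ⊆ {z | Lf n m m' z = Mr m} := by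
  refine convexHull_min ?_ (convex_hyperplane (Lf n m m').isLinear _)
  rintro z (rfl | ⟨a, ha, rfl⟩)
  · rw [Set.mem_setOf_eq, Lf_apply, Ssum_tvec]
    have hs : (∑ j : Fin n, if j = i then m' - 1 else 0) = m' - 1 := by simp
    rw [hs, Mr_cast hm']
    simp only [tvec_eq_vecc, vecc_last]
    ring
  · rw [Set.mem_setOf_eq, Lf_apply, Ssum_tvec, ha, Mr_cast hm]
    simp only [tvec_eq_vecc, vecc_last]
    ring

lemma hullT_hyp {m m' : ℕ} (hm : 2 < m) (hm' : 2 < m') :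
    convexHull ℝ (teT n m m') ⊆ {z | Lf n m m' z = Mr m} := by
  refine convexHull_min ?_ (convex_hyperplane (Lf n m m').isLinear _)
  rintro z (⟨a, ha, rfl⟩ | ⟨a, ha, rfl⟩)
  · rw [Set.mem_setOf_eq, Lf_apply, Ssum_tvec, ha, Mr_cast hm]
    simp only [tvec_eq_vecc, vecc_last]
    ring
  · rw [Set.mem_setOf_eq, Lf_apply, Ssum_tvec, ha, Mr_cast hm']
    simp only [tvec_eq_vecc, vecc_last]
    ring

lemma vol_sum_null {ι : Type*} [DecidableEq ι] {m m' : ℕ} (hn : 0 < n) (I' : Finset ι)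
    (B : ι → Set (Eu n)) (hB : ∀ i ∈ I', B i ⊆ {z | Lf n m m' z = Mr m}) :
    volume (∑ i ∈ I', B i) = 0 := by
  classical
  refine measure_mono_null (t := {z : Eu n | Lf n m m' z = I'.card * Mr m}) ?_
    (vol_levelset_zero hn _)
  intro z hz
  obtain ⟨f, hf, rfl⟩ := mem_setSum.1 hz
  rw [Set.mem_setOf_eq, map_sum]
  rw [Finset.sum_congr rfl (fun i hi => hB i hi (hf i hi))]
  rw [Finset.sum_const, nsmul_eq_mul]

lemma RR_empty_empty {m m' : ℕ} (hm' : 2 < m') : RR n m m' ∅ = ∅ := by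
  have hM' := Mr_pos hm'
  ext z
  simp only [RR, Set.mem_setOf_eq, Set.mem_empty_iff_false, iff_false]
  rintro ⟨h1, h2, h3, h4, h5, h6⟩
  simp only [Finset.sum_empty, Finset.card_empty, Nat.cast_zero, zero_add] at h4
  nlinarith

lemma neg_one_pow_sub {c : ℕ} (h : c ≤ n) : (-1 : ℝ) ^ (n - c) = (-1) ^ n * (-1) ^ c := by
  have h1 : (-1 : ℝ) ^ (n - c) * (-1) ^ c = (-1) ^ n := by
    rw [← pow_add, Nat.sub_add_cancel h]
  have h2 : (-1 : ℝ) ^ c * (-1) ^ c = 1 := by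
    rw [← pow_add]
    exact Even.neg_one_pow ⟨c, rfl⟩
  calc (-1 : ℝ) ^ (n - c) = (-1 : ℝ) ^ (n - c) * ((-1) ^ c * (-1) ^ c) := by rw [h2, mul_one]
    _ = ((-1 : ℝ) ^ (n - c) * (-1) ^ c) * (-1) ^ c := by ring
    _ = (-1) ^ n * (-1) ^ c := by rw [h1]

lemma inner_sum (A : Finset (Fin n)) :
    ∑ J ∈ Finset.univ.powerset.filter (fun J => A ⊆ J), (-1 : ℝ) ^ (n - J.card)
      = if A = Finset.univ then 1 else 0 := by
  classical
  have hbij : ∑ J ∈ Finset.univ.powerset.filter (fun J => A ⊆ J), (-1 : ℝ) ^ (n - J.card)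
      = ∑ B ∈ (Finset.univ \ A).powerset, (-1 : ℝ) ^ (n - (A ∪ B).card) := by
    refine Finset.sum_nbij' (fun J => J \ A) (fun B => A ∪ B) ?_ ?_ ?_ ?_ ?_
    · intro J hJ
      rw [Finset.mem_filter, Finset.mem_powerset] at hJ
      rw [Finset.mem_powerset]
      exact Finset.sdiff_subset_sdiff hJ.1 (Finset.Subset.refl _)
    · intro B hB
      rw [Finset.mem_powerset] at hB
      rw [Finset.mem_filter, Finset.mem_powerset]
      exact ⟨Finset.subset_univ _, Finset.subset_union_left⟩
    · intro J hJ
      rw [Finset.mem_filter] at hJ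
      exact Finset.union_sdiff_of_subset hJ.2
    · intro B hB
      rw [Finset.mem_powerset] at hB
      refine Finset.union_sdiff_cancel_left ?_
      intro C hCA hCB
      intro x hx
      have h1 := hCA hx
      have h2 := hB (hCB hx)
      rw [Finset.mem_sdiff] at h2
      exact absurd h1 h2.2
    · intro J hJ
      rw [Finset.mem_filter] at hJ
      rw [Finset.union_sdiff_of_subset hJ.2]
  rw [hbij]
  have hdisj : ∀ B ∈ (Finset.univ \ A).powerset, Disjoint A B := by
    intro B hB
    rw [Finset.mem_powerset] at hB
    intro C hCA hCB x hx
    have h2 := hB (hCB hx)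
    rw [Finset.mem_sdiff] at h2
    exact absurd (hCA hx) h2.2
  have hcardle : ∀ B ∈ (Finset.univ \ A).powerset, A.card + B.card ≤ n := by
    intro B hB
    rw [← Finset.card_union_of_disjoint (hdisj B hB)]
    calc (A ∪ B).card ≤ (Finset.univ : Finset (Fin n)).card := Finset.card_le_card
          (Finset.subset_univ _)
      _ = n := by rw [Finset.card_univ, Fintype.card_fin]
  rw [Finset.sum_congr rfl (fun B hB => by
    rw [Finset.card_union_of_disjoint (hdisj B hB), neg_one_pow_sub (hcardle B hB), pow_add])]
  rw [Finset.sum_congr rfl (fun B _ => by ring :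
    ∀ B ∈ (Finset.univ \ A).powerset, (-1:ℝ) ^ n * ((-1) ^ A.card * (-1) ^ B.card)
      = ((-1:ℝ) ^ n * (-1) ^ A.card) * (-1) ^ B.card)]
  rw [← Finset.mul_sum]
  have hcast : ∑ B ∈ (Finset.univ \ A).powerset, (-1 : ℝ) ^ B.card
      = if Finset.univ \ A = ∅ then 1 else 0 := by
    have := congrArg (fun x : ℤ => (x : ℝ)) (Finset.sum_powerset_neg_one_pow_card
      (x := Finset.univ \ A))
    push_cast at this
    convert this using 2
  rw [hcast]
  by_cases hA : A = Finset.univ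
  · have he : Finset.univ \ A = ∅ := by rw [hA, Finset.sdiff_self]
    rw [if_pos he, if_pos hA, hA, mul_one]
    rw [Finset.card_univ, Fintype.card_fin, ← pow_add]
    exact Even.neg_one_pow ⟨n, rfl⟩
  · have he : Finset.univ \ A ≠ ∅ := by
      intro h
      exact hA (Finset.univ_subset_iff.1 (Finset.sdiff_eq_empty_iff_subset.1 h))
    rw [if_neg he, if_neg hA, mul_zero]

lemma toReal_identity {m m' : ℕ} (hm : 2 < m) (hm' : 2 < m') (J : Finset (Fin n)) :
    (volume (HTs n m m' J.card)).toReal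
      = (volume (HSs n m m' J)).toReal + ∑ A ∈ J.powerset, (volume (RR n m m' A)).toReal := by
  have hsplit := vol_split hm hm' J
  have hfin : volume (HTs n m m' (J.card : ℝ)) ≠ ⊤ :=
    (vol_HT_lt_top hm hm' J.card (Nat.cast_nonneg _)).ne
  have hHSfin : volume (HSs n m m' J) ≠ ⊤ := by
    refine ne_top_of_le_ne_top hfin ?_
    rw [hsplit]; exact le_self_add
  have hsumfin : ∑ A ∈ J.powerset, volume (RR n m m' A) ≠ ⊤ := by
    refine ne_top_of_le_ne_top hfin ?_
    rw [hsplit]; exact le_add_self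
  have hterm : ∀ A ∈ J.powerset, volume (RR n m m' A) ≠ ⊤ := by
    intro A hA
    refine ne_top_of_le_ne_top hsumfin ?_
    exact Finset.single_le_sum (f := fun B => volume (RR n m m' B)) (fun B _ => zero_le) hA
  rw [hsplit, ENNReal.toReal_add hHSfin hsumfin, ENNReal.toReal_sum hterm]

lemma sum_diff_zero {m m' : ℕ} (hm : 2 < m) (hm' : 2 < m') (F G : Finset (Fin n) → ℝ)
    (hFG : ∀ J ∈ (Finset.univ : Finset (Fin n)).powerset,
      F J - G J = ∑ A ∈ J.powerset, (volume (RR n m m' A)).toReal) :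
    ∑ J ∈ (Finset.univ : Finset (Fin n)).powerset, (-1 : ℝ) ^ (n - J.card) * F J
      = ∑ J ∈ (Finset.univ : Finset (Fin n)).powerset, (-1 : ℝ) ^ (n - J.card) * G J := by
  classical
  rw [← sub_eq_zero, ← Finset.sum_sub_distrib]
  have hstep : ∀ J ∈ (Finset.univ : Finset (Fin n)).powerset,
      (-1 : ℝ) ^ (n - J.card) * F J - (-1 : ℝ) ^ (n - J.card) * G J
        = ∑ A ∈ J.powerset, (-1 : ℝ) ^ (n - J.card) * (volume (RR n m m' A)).toReal := by
    intro J hJ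
    rw [← mul_sub, hFG J hJ, Finset.mul_sum]
  rw [Finset.sum_congr rfl hstep]
  rw [Finset.sum_comm' (s' := fun A => Finset.univ.powerset.filter fun J => A ⊆ J)
    (t' := (Finset.univ : Finset (Fin n)).powerset) ?_]
  · have hinner : ∀ A ∈ (Finset.univ : Finset (Fin n)).powerset,
        ∑ J ∈ Finset.univ.powerset.filter (fun J => A ⊆ J),
          (-1 : ℝ) ^ (n - J.card) * (volume (RR n m m' A)).toReal
        = (if A = Finset.univ then (1:ℝ) else 0) * (volume (RR n m m' A)).toReal := by
      intro A _
      rw [← Finset.sum_mul, inner_sum]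
    rw [Finset.sum_congr rfl hinner]
    rw [Finset.sum_congr rfl (fun A _ => by rw [ite_mul, one_mul, zero_mul] :
      ∀ A ∈ (Finset.univ : Finset (Fin n)).powerset,
        (if A = Finset.univ then (1:ℝ) else 0) * (volume (RR n m m' A)).toReal
          = if A = Finset.univ then (volume (RR n m m' A)).toReal else 0)]
    rw [Finset.sum_ite_eq' Finset.univ.powerset Finset.univ
      (fun A => (volume (RR n m m' A)).toReal)]
    rw [if_pos (Finset.mem_powerset.2 (Finset.Subset.refl _))]
    rw [RR_univ_empty hm hm']
    simp
  · intro J A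
    simp only [Finset.mem_powerset, Finset.mem_filter]
    constructor
    · rintro ⟨hJ, hA⟩
      exact ⟨⟨Finset.subset_univ _, hA⟩, Finset.subset_univ _⟩
    · rintro ⟨⟨hJ, hA⟩, -⟩
      exact ⟨hJ, hA⟩

lemma reindex_powerset (F : Finset (Fin (n+1)) → ℝ) :
    ∑ t ∈ (Finset.univ.map Fin.castSuccEmb).powerset, F t
      = ∑ J ∈ (Finset.univ : Finset (Fin n)).powerset, F (J.map Fin.castSuccEmb) := by
  classical
  have key : ∀ t ∈ (Finset.univ.map Fin.castSuccEmb).powerset,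
      (Finset.univ.filter fun j : Fin n => j.castSucc ∈ t).map Fin.castSuccEmb = t := by
    intro t ht
    rw [Finset.mem_powerset] at ht
    ext i
    simp only [Finset.mem_map, Finset.mem_filter, Finset.mem_univ, true_and]
    constructor
    · rintro ⟨j, hj, rfl⟩
      exact hj
    · intro hi
      have := ht hi
      rw [Finset.mem_map] at this
      obtain ⟨j, -, rfl⟩ := this
      exact ⟨j, hi, rfl⟩
  refine Finset.sum_nbij' (fun t => Finset.univ.filter fun j : Fin n => j.castSucc ∈ t)
    (fun J => J.map Fin.castSuccEmb) ?_ ?_ ?_ ?_ ?_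
  · intro t _
    exact Finset.mem_powerset.2 (Finset.subset_univ _)
  · intro J _
    exact Finset.mem_powerset.2 (Finset.map_subset_map.2 (Finset.subset_univ _))
  · exact key
  · intro J _
    ext j
    simp only [Finset.mem_filter, Finset.mem_univ, true_and]
    exact Finset.mem_map' Fin.castSuccEmb
  · intro t ht
    rw [key t ht]

end TMV

set_option maxHeartbeats 1000000 in
/-- The tensor eigenpair system and the generalized tensor eigenpair system have the same
BKK bound: `mvol(conv S₁,…,conv Sₙ, conv S_{n+1}) = mvol(conv T,…,conv T, conv S_{n+1})`. -/
theorem tensor_mvol_eq (n m m' : ℕ) (hn : 2 < n) (hm : 2 < m) (hm' : 2 < m') :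
    mvol (Fin.snoc (fun i : Fin n => convexHull ℝ (teS n m m' i))
        (convexHull ℝ (teSlast n)))
      = mvol (Fin.snoc (fun _ : Fin n => convexHull ℝ (teT n m m'))
        (convexHull ℝ (teSlast n))) := by
  classical
  have hn0 : 0 < n := by omega
  have hlastnot : Fin.last n ∉ Finset.univ.map Fin.castSuccEmb := by
    rw [Finset.mem_map]
    rintro ⟨j, -, hj⟩
    exact (Fin.castSucc_lt_last j).ne hj
  have hJlast : ∀ J : Finset (Fin n), Fin.last n ∉ J.map Fin.castSuccEmb := by
    intro J hmem
    exact hlastnot (Finset.map_subset_map.2 (Finset.subset_univ J) hmem)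
  have hsplit : ∀ P : Fin n → Set (TMV.Eu n),
      (∀ j : Fin n, P j ⊆ {z | TMV.Lf n m m' z = TMV.Mr m}) →
      mvol (Fin.snoc P (convexHull ℝ (teSlast n)))
        = ∑ J ∈ (Finset.univ : Finset (Fin n)).powerset,
          (-1 : ℝ) ^ (n - J.card)
            * (volume ((∑ j ∈ J, P j) + convexHull ℝ (teSlast n))).toReal := by
    intro P hP
    rw [mvol, Finset.sum_filter]
    rw [show (Finset.univ : Finset (Fin (n+1))) = insert (Fin.last n)
        (Finset.univ.map Fin.castSuccEmb) by
      rw [Fin.univ_castSuccEmb, Finset.cons_eq_insert]]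
    rw [Finset.sum_powerset_insert hlastnot]
    have hzero : ∑ t ∈ (Finset.univ.map Fin.castSuccEmb).powerset,
        (if t.Nonempty then
          (-1 : ℝ) ^ (Fintype.card (Fin (n+1)) - t.card)
            * (volume (∑ i ∈ t,
                (Fin.snoc P (convexHull ℝ (teSlast n)) : Fin (n+1) → Set (TMV.Eu n)) i)).toReal
          else 0) = 0 := by
      refine Finset.sum_eq_zero fun t ht => ?_
      by_cases hne : t.Nonempty
      · rw [if_pos hne]
        have hvol : volume (∑ i ∈ t,
            (Fin.snoc P (convexHull ℝ (teSlast n)) : Fin (n+1) → Set (TMV.Eu n)) i) = 0 := by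
          refine TMV.vol_sum_null (m := m) (m' := m') hn0 t _ ?_
          intro i hi
          have hmem := Finset.mem_powerset.1 ht hi
          rw [Finset.mem_map] at hmem
          obtain ⟨j, -, rfl⟩ := hmem
          show (Fin.snoc P (convexHull ℝ (teSlast n)) : Fin (n+1) → Set (TMV.Eu n))
            j.castSucc ⊆ _
          rw [Fin.snoc_castSucc]
          exact hP j
        rw [hvol]
        simp
      · rw [if_neg hne]
    rw [hzero, zero_add, TMV.reindex_powerset _]
    refine Finset.sum_congr rfl fun J _ => ?_
    rw [if_pos (Finset.insert_nonempty _ _)]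
    have hcard : (insert (Fin.last n) (J.map Fin.castSuccEmb)).card = J.card + 1 := by
      rw [Finset.card_insert_of_notMem (hJlast J), Finset.card_map]
    have hset : ∑ i ∈ insert (Fin.last n) (J.map Fin.castSuccEmb),
        (Fin.snoc P (convexHull ℝ (teSlast n)) : Fin (n+1) → Set (TMV.Eu n)) i
        = (∑ j ∈ J, P j) + convexHull ℝ (teSlast n) := by
      rw [Finset.sum_insert (hJlast J), Fin.snoc_last, Finset.sum_map]
      rw [Finset.sum_congr rfl (fun j _ => by
        show (Fin.snoc P (convexHull ℝ (teSlast n)) : Fin (n+1) → Set (TMV.Eu n))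
          j.castSucc = P j
        rw [Fin.snoc_castSucc] :
        ∀ j ∈ J, (Fin.snoc P (convexHull ℝ (teSlast n)) : Fin (n+1) → Set (TMV.Eu n))
          (Fin.castSuccEmb j) = P j)]
      exact add_comm _ _
    rw [hcard, hset, Fintype.card_fin, Nat.succ_sub_succ]
  rw [hsplit (fun i => convexHull ℝ (teS n m m' i)) (fun j => TMV.hullS_hyp hm hm' j),
    hsplit (fun _ => convexHull ℝ (teT n m m')) (fun _ => TMV.hullT_hyp hm hm')]
  refine (TMV.sum_diff_zero hm hm'
    (fun J => (volume ((∑ _j ∈ J, convexHull ℝ (teT n m m')) + convexHull ℝ (teSlast n))).toReal)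
    (fun J => (volume ((∑ j ∈ J, convexHull ℝ (teS n m m' j)) + convexHull ℝ (teSlast n))).toReal)
    ?_).symm
  intro J _
  rcases Finset.eq_empty_or_nonempty J with rfl | hne
  · simp only [Finset.sum_empty, Finset.powerset_empty, Finset.sum_singleton]
    rw [TMV.RR_empty_empty (m := m) hm']
    simp
  · show (volume ((∑ _j ∈ J, convexHull ℝ (teT n m m')) + convexHull ℝ (teSlast n))).toReal
        - (volume ((∑ j ∈ J, convexHull ℝ (teS n m m' j)) + convexHull ℝ (teSlast n))).toReal
        = ∑ A ∈ J.powerset, (volume (TMV.RR n m m' A)).toReal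
    rw [TMV.sumT_eq hm hm' J hne, TMV.sumS_eq hm hm' J hne, TMV.toReal_identity hm hm' J]
    ring
end

section
/- Let n ≥ 2, e₁, …, eₙ the standard basis of ℝⁿ, e₀ := 0, and for i = 1, …, n let i⁺ = (i+1) mod (n+1), i⁻ = (i−1) mod (n+1), and Sᵢ = {0, eᵢ − e_{i⁺}, e_{i⁺} − eᵢ, eᵢ − e_{i⁻}, e_{i⁻} − eᵢ}. Then every proper positive-dimensional face F of conv(S₁ ∪ ⋯ ∪ Sₙ) either intersects some S_j in exactly one point, or intersects every Sᵢ for i = 1, …, n. -/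
open MeasureTheory Pointwise

/-- `faceOf P α` is the face `(P)_α` of the set `P` with inner normal `α`. -/
def faceOf {d : ℕ} (P : Set (EuclideanSpace ℝ (Fin d)))
    (α : EuclideanSpace ℝ (Fin d)) : Set (EuclideanSpace ℝ (Fin d)) :=
  {q ∈ P | ∀ p ∈ P, inner (𝕜 := ℝ) q α ≤ inner (𝕜 := ℝ) p α}

/-- `nodeVec n k` is the vector `e_k ∈ ℝⁿ` for node index `k`, with `e_0 = 0` and, for
`1 ≤ k ≤ n`, `e_k` the `k`-th standard basis vector. -/
noncomputable def nodeVec (n : ℕ) (k : ℕ) : EuclideanSpace ℝ (Fin n) :=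
  if h : 1 ≤ k ∧ k ≤ n then EuclideanSpace.single ⟨k - 1, by omega⟩ 1 else 0

/-- The support `Sᵢ = {0, eᵢ − e_{i⁺}, e_{i⁺} − eᵢ, eᵢ − e_{i⁻}, e_{i⁻} − eᵢ}` of the
Kuramoto synchronization system on a cycle, where the index `i : Fin n` represents the
node `i+1 ∈ {1,…,n}`, `i⁺ = (i+1+1) mod (n+1)` and `i⁻ = (i+1−1) mod (n+1)`. -/
noncomputable def kuraS (n : ℕ) (i : Fin n) : Set (EuclideanSpace ℝ (Fin n)) :=
  {0, nodeVec n (i.val + 1) - nodeVec n ((i.val + 1 + 1) % (n + 1)),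
      nodeVec n ((i.val + 1 + 1) % (n + 1)) - nodeVec n (i.val + 1),
      nodeVec n (i.val + 1) - nodeVec n ((i.val + 1 - 1) % (n + 1)),
      nodeVec n ((i.val + 1 - 1) % (n + 1)) - nodeVec n (i.val + 1)}

/-- `kv n α k = ⟨e_k, α⟩`. -/
noncomputable def kv (n : ℕ) (α : EuclideanSpace ℝ (Fin n)) (k : ℕ) : ℝ :=
  inner (𝕜 := ℝ) (nodeVec n k) α

/-- `kd n α k = ⟨e_k - e_{k+1 mod n+1}, α⟩`, the value of `α` on the `k`-th cycle edge. -/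
noncomputable def kd (n : ℕ) (α : EuclideanSpace ℝ (Fin n)) (k : ℕ) : ℝ :=
  kv n α k - kv n α ((k + 1) % (n + 1))

lemma inner_sub_nodeVec (n : ℕ) (α : EuclideanSpace ℝ (Fin n)) (a b : ℕ) :
    inner (𝕜 := ℝ) (nodeVec n a - nodeVec n b) α = kv n α a - kv n α b :=
  inner_sub_left _ _ _

lemma kv_zero (n : ℕ) (α : EuclideanSpace ℝ (Fin n)) : kv n α 0 = 0 := by
  simp [kv, nodeVec]

lemma kv_eq (n : ℕ) (α : EuclideanSpace ℝ (Fin n)) (k : ℕ) (h1 : 1 ≤ k) (h2 : k ≤ n) :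
    kv n α k = α ⟨k - 1, by omega⟩ := by
  rw [kv, nodeVec, dif_pos ⟨h1, h2⟩, EuclideanSpace.inner_single_left]; simp

/-- Inner product of the first nonzero element of `kuraS n i` with `α`. -/
lemma inner_v1 (n : ℕ) (α : EuclideanSpace ℝ (Fin n)) (i : Fin n) :
    inner (𝕜 := ℝ) (nodeVec n (i.val + 1) - nodeVec n ((i.val + 1 + 1) % (n + 1))) α
      = kd n α (i.val + 1) :=
  inner_sub_left _ _ _

lemma inner_v2 (n : ℕ) (α : EuclideanSpace ℝ (Fin n)) (i : Fin n) :
    inner (𝕜 := ℝ) (nodeVec n ((i.val + 1 + 1) % (n + 1)) - nodeVec n (i.val + 1)) α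
      = -(kd n α (i.val + 1)) := by
  rw [inner_sub_nodeVec, kd]; ring

lemma inner_v3 (n : ℕ) (α : EuclideanSpace ℝ (Fin n)) (i : Fin n) :
    inner (𝕜 := ℝ) (nodeVec n (i.val + 1) - nodeVec n ((i.val + 1 - 1) % (n + 1))) α
      = -(kd n α i.val) := by
  have h1 : (i.val + 1 - 1) % (n + 1) = i.val := Nat.mod_eq_of_lt (by omega)
  have h2 : (i.val + 1) % (n + 1) = i.val + 1 := Nat.mod_eq_of_lt (by omega)
  rw [inner_sub_nodeVec, h1, kd, h2]; ring

lemma inner_v4 (n : ℕ) (α : EuclideanSpace ℝ (Fin n)) (i : Fin n) :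
    inner (𝕜 := ℝ) (nodeVec n ((i.val + 1 - 1) % (n + 1)) - nodeVec n (i.val + 1)) α
      = kd n α i.val := by
  have h1 : (i.val + 1 - 1) % (n + 1) = i.val := Nat.mod_eq_of_lt (by omega)
  have h2 : (i.val + 1) % (n + 1) = i.val + 1 := Nat.mod_eq_of_lt (by omega)
  rw [inner_sub_nodeVec, h1, kd, h2]

lemma mem_v1 (n : ℕ) (i : Fin n) :
    nodeVec n (i.val + 1) - nodeVec n ((i.val + 1 + 1) % (n + 1)) ∈ kuraS n i :=
  Or.inr (Or.inl rfl)

lemma mem_v2 (n : ℕ) (i : Fin n) :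
    nodeVec n ((i.val + 1 + 1) % (n + 1)) - nodeVec n (i.val + 1) ∈ kuraS n i :=
  Or.inr (Or.inr (Or.inl rfl))

lemma mem_v3 (n : ℕ) (i : Fin n) :
    nodeVec n (i.val + 1) - nodeVec n ((i.val + 1 - 1) % (n + 1)) ∈ kuraS n i :=
  Or.inr (Or.inr (Or.inr (Or.inl rfl)))

lemma mem_v4 (n : ℕ) (i : Fin n) :
    nodeVec n ((i.val + 1 - 1) % (n + 1)) - nodeVec n (i.val + 1) ∈ kuraS n i :=
  Or.inr (Or.inr (Or.inr (Or.inr rfl)))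

/-- Each cycle edge vector (and its negation) appears in the union of the supports. -/
lemma edge_mem (n : ℕ) (hn : 2 ≤ n) (k : ℕ) (hk : k ≤ n) :
    nodeVec n k - nodeVec n ((k + 1) % (n + 1)) ∈ ⋃ i, kuraS n i ∧
    nodeVec n ((k + 1) % (n + 1)) - nodeVec n k ∈ ⋃ i, kuraS n i := by
  rcases Nat.eq_zero_or_pos k with rfl | hk1
  · -- k = 0 : these are elements v4, v3 of `kuraS n ⟨0, _⟩`
    refine ⟨Set.mem_iUnion.mpr ⟨⟨0, by omega⟩, ?_⟩, Set.mem_iUnion.mpr ⟨⟨0, by omega⟩, ?_⟩⟩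
    · have h1 : 1 % (n + 1) = 1 := Nat.mod_eq_of_lt (by omega)
      have h := mem_v4 n (⟨0, by omega⟩ : Fin n)
      simpa [h1] using h
    · have h1 : 1 % (n + 1) = 1 := Nat.mod_eq_of_lt (by omega)
      have h := mem_v3 n (⟨0, by omega⟩ : Fin n)
      simpa [h1] using h
  · -- k ≥ 1 : these are elements v1, v2 of `kuraS n ⟨k-1, _⟩`
    have hk' : k - 1 + 1 = k := by omega
    refine ⟨Set.mem_iUnion.mpr ⟨⟨k - 1, by omega⟩, ?_⟩, Set.mem_iUnion.mpr ⟨⟨k - 1, by omega⟩, ?_⟩⟩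
    · have h := mem_v1 n (⟨k - 1, by omega⟩ : Fin n)
      simpa [hk'] using h
    · have h := mem_v2 n (⟨k - 1, by omega⟩ : Fin n)
      simpa [hk'] using h

/-- Every proper positive-dimensional face `F` of `conv(S₁ ∪ ⋯ ∪ Sₙ)` (for the Kuramoto
supports on a cycle) either intersects some `S j` in exactly one point, or intersects every
`S i`. -/
theorem kuramoto_face_dichotomy (n : ℕ) (hn : 2 ≤ n)
    (α : EuclideanSpace ℝ (Fin n)) (hα : α ≠ 0)
    (F : Set (EuclideanSpace ℝ (Fin n)))
    (hF : F = faceOf (convexHull ℝ (⋃ i, kuraS n i)) α)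
    (hproper : F ≠ convexHull ℝ (⋃ i, kuraS n i))
    (hposdim : ∃ x ∈ F, ∃ y ∈ F, x ≠ y) :
    (∃ j : Fin n, ∃ a, F ∩ kuraS n j = {a}) ∨ (∀ i : Fin n, (F ∩ kuraS n i).Nonempty) := by
  classical
  have hne : (Finset.range (n + 1)).Nonempty := ⟨0, Finset.mem_range.mpr (by omega)⟩
  obtain ⟨k₀, hk₀r, hk₀⟩ := Finset.exists_mem_eq_sup' hne (fun k => |kd n α k|)
  set M : ℝ := (Finset.range (n + 1)).sup' hne (fun k => |kd n α k|) with hMdef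
  have hk₀n : k₀ ≤ n := by have := Finset.mem_range.mp hk₀r; omega
  have hle : ∀ k, k ≤ n → |kd n α k| ≤ M := by
    intro k hk
    exact Finset.le_sup' (fun k => |kd n α k|) (Finset.mem_range.mpr (by omega))
  -- M > 0
  have hMpos : 0 < M := by
    rcases lt_or_ge 0 M with h | h
    · exact h
    · exfalso
      have hall0 : ∀ k, k ≤ n → kd n α k = 0 := by
        intro k hk
        have h1 : |kd n α k| ≤ 0 := (hle k hk).trans h
        exact abs_eq_zero.mp (le_antisymm h1 (abs_nonneg _))
      have hvz : ∀ k, k ≤ n → kv n α k = 0 := by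
        intro k
        induction k with
        | zero => intro _; exact kv_zero n α
        | succ m ih =>
          intro hk
          have hdm := hall0 m (by omega)
          have hmod : (m + 1) % (n + 1) = m + 1 := Nat.mod_eq_of_lt (by omega)
          rw [kd, hmod] at hdm
          have := ih (by omega)
          linarith
      apply hα
      ext x
      have h1 := hvz (x.val + 1) (by omega)
      rw [kv_eq n α (x.val + 1) (by omega) (by omega)] at h1
      have hx : (⟨x.val + 1 - 1, by omega⟩ : Fin n) = x := by
        apply Fin.ext; simp
      rw [hx] at h1
      simpa using h1
  -- every generator lies in the halfspace `-M ≤ ⟨·, α⟩`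
  have hgen : ∀ p ∈ (⋃ i, kuraS n i), -M ≤ inner (𝕜 := ℝ) p α := by
    intro p hp
    obtain ⟨i, hi⟩ := Set.mem_iUnion.mp hp
    have e1 := abs_le.mp (hle (i.val + 1) i.isLt)
    have e2 := abs_le.mp (hle i.val (by omega))
    simp only [kuraS, Set.mem_insert_iff, Set.mem_singleton_iff] at hi
    rcases hi with rfl | rfl | rfl | rfl | rfl
    · rw [inner_zero_left]; linarith
    · rw [inner_v1]; linarith [e1.1]
    · rw [inner_v2]; linarith [e1.2]
    · rw [inner_v3]; linarith [e2.2]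
    · rw [inner_v4]; linarith [e2.1]
  have hhalf : convexHull ℝ (⋃ i, kuraS n i) ⊆
      {x : EuclideanSpace ℝ (Fin n) | -M ≤ inner (𝕜 := ℝ) x α} := by
    apply convexHull_min hgen
    exact convex_halfSpace_ge
      ⟨fun x y => inner_add_left x y α, fun c x => real_inner_smul_left x α c⟩ (-M)
  -- the minimum `-M` is achieved on the generating set
  have hach : ∃ u ∈ (⋃ i, kuraS n i), inner (𝕜 := ℝ) u α = -M := by
    obtain ⟨hm1, hm2⟩ := edge_mem n hn k₀ hk₀n
    rcases abs_cases (kd n α k₀) with ⟨he, _⟩ | ⟨he, _⟩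
    · refine ⟨_, hm2, ?_⟩
      rw [inner_sub_nodeVec]
      have : kd n α k₀ = kv n α k₀ - kv n α ((k₀ + 1) % (n + 1)) := rfl
      rw [hk₀] at hMdef
      linarith
    · refine ⟨_, hm1, ?_⟩
      rw [inner_sub_nodeVec]
      have : kd n α k₀ = kv n α k₀ - kv n α ((k₀ + 1) % (n + 1)) := rfl
      rw [hk₀] at hMdef
      linarith
  -- characterization of membership in F
  have hface : ∀ q, q ∈ F ↔
      q ∈ convexHull ℝ (⋃ i, kuraS n i) ∧ inner (𝕜 := ℝ) q α = -M := by
    intro q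
    rw [hF]
    simp only [faceOf, Set.mem_sep_iff]
    constructor
    · rintro ⟨hq, hmin⟩
      refine ⟨hq, le_antisymm ?_ (hhalf hq)⟩
      obtain ⟨u, hu, hu2⟩ := hach
      have := hmin u (subset_convexHull ℝ _ hu)
      linarith
    · rintro ⟨hq, he⟩
      exact ⟨hq, fun p hp => by rw [he]; exact hhalf hp⟩
  -- membership helper: elements of some `kuraS n i` with value `-M` are in `F`
  have hFmem : ∀ (i : Fin n) (x : EuclideanSpace ℝ (Fin n)), x ∈ kuraS n i →
      inner (𝕜 := ℝ) x α = -M → x ∈ F := by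
    intro i x hx hval
    exact (hface x).mpr ⟨subset_convexHull ℝ _ (Set.mem_iUnion.mpr ⟨i, hx⟩), hval⟩
  -- dichotomy on whether adjacency of max-achieving edges is "balanced" at every node
  by_cases hiff : ∀ i : Fin n, (|kd n α (i.val + 1)| = M ↔ |kd n α i.val| = M)
  · -- all edges achieve the maximum, so F meets every Sᵢ
    right
    have hchain : ∀ k, k ≤ n → (|kd n α k| = M ↔ |kd n α 0| = M) := by
      intro k
      induction k with
      | zero => intro _; exact Iff.rfl
      | succ m ih =>
        intro hk
        exact (hiff ⟨m, by omega⟩).trans (ih (by omega))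
    have h0 : |kd n α 0| = M := (hchain k₀ hk₀n).mp hk₀.symm
    have hall : ∀ k, k ≤ n → |kd n α k| = M := fun k hk => (hchain k hk).mpr h0
    intro i
    have hj : |kd n α (i.val + 1)| = M := hall (i.val + 1) i.isLt
    rcases abs_cases (kd n α (i.val + 1)) with ⟨he, _⟩ | ⟨he, _⟩
    · -- `kd (i+1) = M` : take v2
      refine ⟨_, hFmem i _ (mem_v2 n i) ?_, mem_v2 n i⟩
      rw [inner_v2]; linarith
    · -- `kd (i+1) = -M` : take v1
      refine ⟨_, hFmem i _ (mem_v1 n i) ?_, mem_v1 n i⟩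
      rw [inner_v1]; linarith
  · -- some node has exactly one incident max-achieving edge: singleton intersection
    left
    push_neg at hiff
    obtain ⟨i, hi⟩ := hiff
    have habs1 : ∀ x : ℝ, x = M → |x| = M := fun x hx => by
      rw [hx]; exact abs_of_pos hMpos
    have habs2 : ∀ x : ℝ, x = -M → |x| = M := fun x hx => by
      rw [hx, abs_neg]; exact abs_of_pos hMpos
    rcases hi with ⟨hA, hB⟩ | ⟨hA, hB⟩
    ·
      rcases abs_cases (kd n α (i.val + 1)) with ⟨he, _⟩ | ⟨he, _⟩
      · -- kd (i+1) = M, the unique point is v2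
        rw [hA] at he
        refine ⟨i, _, Set.eq_singleton_iff_unique_mem.mpr
          ⟨⟨hFmem i _ (mem_v2 n i) (by rw [inner_v2]; linarith), mem_v2 n i⟩, ?_⟩⟩
        rintro x ⟨hxF, hxS⟩
        have hx := ((hface x).mp hxF).2
        simp only [kuraS, Set.mem_insert_iff, Set.mem_singleton_iff] at hxS
        rcases hxS with rfl | rfl | rfl | rfl | rfl
        · rw [inner_zero_left] at hx; linarith
        · rw [inner_v1] at hx; linarith
        · rfl
        · rw [inner_v3] at hx
          exact absurd (habs1 _ (by linarith)) hB
        · rw [inner_v4] at hx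
          exact absurd (habs2 _ (by linarith)) hB
      · -- kd (i+1) = -M, the unique point is v1
        rw [hA] at he
        refine ⟨i, _, Set.eq_singleton_iff_unique_mem.mpr
          ⟨⟨hFmem i _ (mem_v1 n i) (by rw [inner_v1]; linarith), mem_v1 n i⟩, ?_⟩⟩
        rintro x ⟨hxF, hxS⟩
        have hx := ((hface x).mp hxF).2
        simp only [kuraS, Set.mem_insert_iff, Set.mem_singleton_iff] at hxS
        rcases hxS with rfl | rfl | rfl | rfl | rfl
        · rw [inner_zero_left] at hx; linarith
        · rfl
        · rw [inner_v2] at hx; linarith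
        · rw [inner_v3] at hx
          exact absurd (habs1 _ (by linarith)) hB
        · rw [inner_v4] at hx
          exact absurd (habs2 _ (by linarith)) hB
    ·
      rcases abs_cases (kd n α i.val) with ⟨he, _⟩ | ⟨he, _⟩
      · -- kd i = M, the unique point is v3
        rw [hB] at he
        refine ⟨i, _, Set.eq_singleton_iff_unique_mem.mpr
          ⟨⟨hFmem i _ (mem_v3 n i) (by rw [inner_v3]; linarith), mem_v3 n i⟩, ?_⟩⟩
        rintro x ⟨hxF, hxS⟩
        have hx := ((hface x).mp hxF).2
        simp only [kuraS, Set.mem_insert_iff, Set.mem_singleton_iff] at hxS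
        rcases hxS with rfl | rfl | rfl | rfl | rfl
        · rw [inner_zero_left] at hx; linarith
        · rw [inner_v1] at hx
          exact absurd (habs2 _ (by linarith)) hA
        · rw [inner_v2] at hx
          exact absurd (habs1 _ (by linarith)) hA
        · rfl
        · rw [inner_v4] at hx; linarith
      · -- kd i = -M, the unique point is v4
        rw [hB] at he
        refine ⟨i, _, Set.eq_singleton_iff_unique_mem.mpr
          ⟨⟨hFmem i _ (mem_v4 n i) (by rw [inner_v4]; linarith), mem_v4 n i⟩, ?_⟩⟩
        rintro x ⟨hxF, hxS⟩
        have hx := ((hface x).mp hxF).2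
        simp only [kuraS, Set.mem_insert_iff, Set.mem_singleton_iff] at hxS
        rcases hxS with rfl | rfl | rfl | rfl | rfl
        · rw [inner_zero_left] at hx; linarith
        · rw [inner_v1] at hx
          exact absurd (habs2 _ (by linarith)) hA
        · rw [inner_v2] at hx
          exact absurd (habs1 _ (by linarith)) hA
        · rw [inner_v3] at hx; linarith
        · rfl
end

section
/- Let n ≥ 2, e₁, …, eₙ the standard basis of ℝⁿ, Sᵢ = {eᵢ, 0} ∪ {eᵢ + 2e_j : j ≠ i} for i = 1, …, n, and Q̃ = conv(S₁ ∪ ⋯ ∪ Sₙ). Let F = (Q̃)_α be a face of Q̃ with nonzero inner normal α ∈ ℝⁿ. If there exist indices i ≠ j such that both eᵢ ∈ F and eᵢ + 2e_j ∈ F, then 0 ∈ F; consequently F intersects every Sₖ for k = 1, …, n. -/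
open MeasureTheory Pointwise

/-- The support `Sᵢ = {eᵢ, 0} ∪ {eᵢ + 2eⱼ : j ≠ i}` of the Noonburg neural-network
system. -/
noncomputable def noonS (n : ℕ) (i : Fin n) : Set (EuclideanSpace ℝ (Fin n)) :=
  {EuclideanSpace.single i 1, 0} ∪
    {x | ∃ j : Fin n, j ≠ i ∧
      x = EuclideanSpace.single i 1 + (2 : ℝ) • EuclideanSpace.single j 1}

/-!
Both `eᵢ` and `eᵢ + 2eⱼ` minimise `⟨·, α⟩` on `Q̃`, so `αᵢ = αᵢ + 2αⱼ`, i.e. `αⱼ = 0`.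
Comparing the minimum `αᵢ` with the values at `0 ∈ Sᵢ` and at `eⱼ + 2eᵢ ∈ Sⱼ` gives
`αᵢ ≤ 0` and `αᵢ ≤ αⱼ + 2αᵢ = 2αᵢ`, so `αᵢ = 0`: the point `0`, which lies in every `Sₖ`,
attains the minimum as well.
-/

section Face

variable {d : ℕ} {P : Set (EuclideanSpace ℝ (Fin d))} {α p q q' : EuclideanSpace ℝ (Fin d)}

theorem inner_le_of_mem_faceOf (hq : q ∈ faceOf P α) (hp : p ∈ P) :
    inner (𝕜 := ℝ) q α ≤ inner (𝕜 := ℝ) p α :=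
  hq.2 p hp

theorem inner_eq_of_mem_faceOf (hq : q ∈ faceOf P α) (hq' : q' ∈ faceOf P α) :
    inner (𝕜 := ℝ) q α = inner (𝕜 := ℝ) q' α :=
  le_antisymm (inner_le_of_mem_faceOf hq hq'.1) (inner_le_of_mem_faceOf hq' hq.1)

theorem mem_faceOf_of_inner_eq (hq : q ∈ faceOf P α) (hp : p ∈ P)
    (h : inner (𝕜 := ℝ) p α = inner (𝕜 := ℝ) q α) : p ∈ faceOf P α :=
  ⟨hp, fun _ hx => h ▸ inner_le_of_mem_faceOf hq hx⟩

end Face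

section Noonburg

variable {n : ℕ}

theorem zero_mem_noonS (k : Fin n) : (0 : EuclideanSpace ℝ (Fin n)) ∈ noonS n k :=
  Or.inl (Or.inr rfl)

theorem single_add_two_smul_single_mem_noonS {i j : Fin n} (hij : i ≠ j) :
    EuclideanSpace.single j 1 + (2 : ℝ) • EuclideanSpace.single i 1 ∈ noonS n j :=
  Or.inr ⟨i, hij, rfl⟩

theorem noonS_subset_convexHull (k : Fin n) :
    noonS n k ⊆ convexHull ℝ (⋃ i, noonS n i) :=
  (Set.subset_iUnion (noonS n) k).trans (subset_convexHull ℝ _)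

theorem inner_single_one (i : Fin n) (α : EuclideanSpace ℝ (Fin n)) :
    inner (𝕜 := ℝ) (EuclideanSpace.single i 1) α = α i := by
  simp [EuclideanSpace.inner_single_left]

theorem inner_single_add_two_smul_single (i j : Fin n) (α : EuclideanSpace ℝ (Fin n)) :
    inner (𝕜 := ℝ) (EuclideanSpace.single i 1 + (2 : ℝ) • EuclideanSpace.single j 1) α
      = α i + 2 * α j := by
  simp [inner_add_left, real_inner_smul_left, EuclideanSpace.inner_single_left]

end Noonburg

theorem noonburg_face_case2_general (n : ℕ)
    (α : EuclideanSpace ℝ (Fin n))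
    (F : Set (EuclideanSpace ℝ (Fin n)))
    (hF : F = faceOf (convexHull ℝ (⋃ i, noonS n i)) α)
    (i j : Fin n) (hij : i ≠ j)
    (h1 : EuclideanSpace.single i 1 ∈ F)
    (h2 : EuclideanSpace.single i 1 + (2 : ℝ) • EuclideanSpace.single j 1 ∈ F) :
    (0 : EuclideanSpace ℝ (Fin n)) ∈ F ∧ ∀ k : Fin n, (F ∩ noonS n k).Nonempty := by
  subst hF
  have hαj : α j = 0 := by
    have h := inner_eq_of_mem_faceOf h1 h2
    rw [inner_single_one, inner_single_add_two_smul_single] at h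
    linarith
  have hαi : α i = 0 := by
    have h_zero := inner_le_of_mem_faceOf h1 (noonS_subset_convexHull i (zero_mem_noonS i))
    have h_ji := inner_le_of_mem_faceOf h1
      (noonS_subset_convexHull j (single_add_two_smul_single_mem_noonS hij))
    rw [inner_single_one, inner_zero_left] at h_zero
    rw [inner_single_one, inner_single_add_two_smul_single] at h_ji
    linarith
  have h0 : (0 : EuclideanSpace ℝ (Fin n)) ∈ faceOf (convexHull ℝ (⋃ i, noonS n i)) α :=
    mem_faceOf_of_inner_eq h1 (noonS_subset_convexHull i (zero_mem_noonS i))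
      (by rw [inner_zero_left, inner_single_one, hαi])
  exact ⟨h0, fun k => ⟨0, h0, zero_mem_noonS k⟩⟩

/-- If a face `F = (Q̃)_α` of `Q̃ = conv(S₁ ∪ ⋯ ∪ Sₙ)` (Noonburg supports) contains both
`eᵢ` and `eᵢ + 2eⱼ` for some `i ≠ j`, then `0 ∈ F`; consequently `F` intersects every
`Sₖ`. -/
theorem noonburg_face_case2 (n : ℕ) (hn : 2 ≤ n)
    (α : EuclideanSpace ℝ (Fin n)) (hα : α ≠ 0)
    (F : Set (EuclideanSpace ℝ (Fin n)))
    (hF : F = faceOf (convexHull ℝ (⋃ i, noonS n i)) α)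
    (i j : Fin n) (hij : i ≠ j)
    (h1 : EuclideanSpace.single i 1 ∈ F)
    (h2 : EuclideanSpace.single i 1 + (2 : ℝ) • EuclideanSpace.single j 1 ∈ F) :
    (0 : EuclideanSpace ℝ (Fin n)) ∈ F ∧ ∀ k : Fin n, (F ∩ noonS n k).Nonempty :=
  noonburg_face_case2_general n α F hF i j hij h1 h2
end
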